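/- arXiv:2402.07931 — 5 statements merged into one kernel-verified Lean document; each statement's English description precedes it below -/
import Mathlib

section
/- For every integer k with 1 ≤ k ≤ 29 and gcd(k, 30) = 1, and for every positive integer K, one has ∑_{n=1}^{K} σ(30n) > ∑_{n=1}^{K} σ(30n + k), where σ denotes the sum-of-divisors function. -/
open ArithmeticFunction Finset

/-!
Write `σ 1 m = ∑_{e ∣ m} m / e`. For `m = 30 n + k`, coprime to `30` and below `30 (K + 1)`,
the divisors `e > K` have distinct cofactors `m / e < 30` coprime to `30`, so they contribute at
most `1 + 7 + ⋯ + 29 = 120`. Swapping the sums over `n ≤ K` and `e ≤ K`, each `e` (necessarily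
coprime to `30`) divides at most `K / e + 1` of the `30 n + k`, each with cofactor
`< 30 (K / e + 1)`. On the other side `σ(30 n) ≥ σ(30) ∑_{e ∣ n, (e, 30) = 1} n / e`, which after
the swap gives `36 q (q + 1)` for each such `e`, where `q = K / e`. Compared `e` by `e`, every
`e ≥ 2` costs at most `51`, while `e = 1` gains `21 K (K + 1) - k K`; this wins once `K ≥ 9`, and
`K ≤ 8` is a finite check.
-/

theorem sum_div_filter_divisors_lt_le {N K m : ℕ} (hm : m.Coprime N) (hmK : m < N * (K + 1)) :
    ∑ e ∈ m.divisors with K < e, m / e ≤ ∑ c ∈ range N with c.Coprime N, c := by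
  rcases eq_or_ne m 0 with rfl | hm0
  · simp
  have hinj : Set.InjOn (m / ·) (m.divisors.filter (K < ·) : Set ℕ) := by
    intro e he e' he' h
    simp only [mem_coe, mem_filter, Nat.mem_divisors] at he he'
    exact (Nat.div_eq_iff_eq_of_dvd_dvd hm0 he.1.1 he'.1.1).mp h
  refine (sum_image (f := fun c => c) hinj).symm.le.trans (sum_le_sum_of_subset fun c hc => ?_)
  obtain ⟨e, he, rfl⟩ := mem_image.mp hc
  simp only [mem_filter, Nat.mem_divisors] at he
  have hlt : m < e * N := mul_comm N e ▸ hmK.trans_le (Nat.mul_le_mul_left N he.2)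
  simp only [mem_filter, mem_range]
  exact ⟨Nat.div_lt_of_lt_mul hlt, hm.coprime_dvd_left (Nat.div_dvd_of_dvd he.1.1)⟩

theorem sigma_one_le_sum_div_filter_dvd_add {N K m : ℕ} (hm : m.Coprime N)
    (hmK : m < N * (K + 1)) :
    sigma 1 m ≤ ∑ e ∈ Icc 1 K with e ∣ m, m / e + ∑ c ∈ range N with c.Coprime N, c := by
  rcases eq_or_ne m 0 with rfl | hm0
  · simp
  have hsmall : m.divisors.filter (· ≤ K) = (Icc 1 K).filter (· ∣ m) := by
    ext e
    simp only [mem_filter, Nat.mem_divisors, mem_Icc]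
    exact ⟨fun ⟨⟨hd, _⟩, he⟩ => ⟨⟨Nat.pos_of_dvd_of_pos hd (Nat.pos_of_ne_zero hm0), he⟩, hd⟩,
      fun ⟨⟨_, he⟩, hd⟩ => ⟨⟨hd, hm0⟩, he⟩⟩
  rw [sigma_eq_sum_div, ← sum_filter_add_sum_filter_not m.divisors (· ≤ K)]
  simp only [pow_one, not_le]
  rw [hsmall]
  exact Nat.add_le_add_left (sum_div_filter_divisors_lt_le hm hmK) _

theorem card_filter_dvd_mul_add_le {a e k K : ℕ} (he : e.Coprime a) :
    #{n ∈ Icc 1 K | e ∣ a * n + k} ≤ K / e + 1 := by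
  rw [← card_range (K / e + 1)]
  refine card_le_card_of_injOn (· / e) (fun n hn => ?_) (fun n hn n' hn' h => ?_)
  · simp only [mem_coe, mem_filter, mem_Icc, mem_range] at hn ⊢
    exact Nat.lt_succ_of_le (Nat.div_le_div_right hn.1.2)
  · simp only [mem_coe, mem_filter] at hn hn'
    have hmod : n % e = n' % e := by
      have hk : a * n + k ≡ a * n' + k [MOD e] :=
        (Nat.modEq_zero_iff_dvd.mpr hn.2).trans (Nat.modEq_zero_iff_dvd.mpr hn'.2).symm
      exact (Nat.ModEq.add_right_cancel' k hk).cancel_left_of_coprime he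
    rw [← Nat.div_add_mod n e, ← Nat.div_add_mod n' e]
    simp only at h
    rw [h, hmod]

theorem sum_div_filter_dvd_mul_add_le {a e k K : ℕ} (he : e.Coprime a) (he0 : 0 < e) (hka : k < a) :
    ∑ n ∈ Icc 1 K with e ∣ a * n + k, (a * n + k) / e
      ≤ (K / e + 1) * (a * (K / e + 1) - 1) := by
  have hterm : ∀ n ∈ (Icc 1 K).filter (e ∣ a * · + k), (a * n + k) / e ≤ a * (K / e + 1) - 1 := by
    intro n hn
    have hnK : n ≤ K := (mem_Icc.mp (mem_filter.mp hn).1).2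
    have hK : K + 1 ≤ (K / e + 1) * e := by
      have := Nat.lt_mul_div_succ K he0
      rw [mul_comm] at this
      omega
    have hlt : a * n + k < a * (K / e + 1) * e := by
      rw [mul_assoc]
      nlinarith [Nat.mul_le_mul_left a hK, Nat.mul_le_mul_left a hnK]
    exact Nat.le_sub_one_of_lt ((Nat.div_lt_iff_lt_mul he0).mpr hlt)
  calc ∑ n ∈ Icc 1 K with e ∣ a * n + k, (a * n + k) / e
      ≤ #{n ∈ Icc 1 K | e ∣ a * n + k} * (a * (K / e + 1) - 1) := sum_le_card_nsmul _ _ _ hterm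
    _ ≤ (K / e + 1) * (a * (K / e + 1) - 1) :=
      Nat.mul_le_mul_right _ (card_filter_dvd_mul_add_le he)

theorem two_mul_sum_Icc_one_id (q : ℕ) : 2 * ∑ j ∈ Icc 1 q, j = q * (q + 1) := by
  induction q with
  | zero => simp
  | succ q ih =>
    rw [sum_Icc_succ_top (by omega), mul_add, ih]
    ring

theorem sum_div_filter_dvd_eq_sum_Icc {e : ℕ} (he0 : 0 < e) (K : ℕ) :
    ∑ n ∈ Icc 1 K with e ∣ n, n / e = ∑ j ∈ Icc 1 (K / e), j := by
  refine sum_nbij' (· / e) (e * ·) (fun n hn => ?_) (fun j hj => ?_) (fun n hn => ?_)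
    (fun j _ => Nat.mul_div_cancel_left j he0) (fun _ _ => rfl)
  · simp only [mem_filter, mem_Icc] at hn ⊢
    exact ⟨Nat.div_pos (Nat.le_of_dvd (by omega) hn.2) he0, Nat.div_le_div_right hn.1.2⟩
  · simp only [mem_filter, mem_Icc] at hj ⊢
    refine ⟨⟨by nlinarith, ?_⟩, dvd_mul_right e j⟩
    exact (Nat.mul_le_mul_left e hj.2).trans (Nat.mul_div_le K e)
  · exact Nat.mul_div_cancel' (mem_filter.mp hn).2

theorem sigma_one_mul_sum_div_filter_coprime_le (a n : ℕ) :
    sigma 1 a * ∑ e ∈ n.divisors with e.Coprime a, n / e ≤ sigma 1 (a * n) := by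
  set E := n.divisors.filter (·.Coprime a)
  have hinj : Set.InjOn (fun p : ℕ × ℕ => p.1 * p.2) ↑(a.divisors ×ˢ E) := by
    rintro ⟨d, e⟩ hde ⟨d', e'⟩ hde' h
    simp only [mem_coe, mem_product, mem_filter, Nat.mem_divisors, E] at hde hde' h
    have hdd' : d = d' := Nat.dvd_antisymm
      ((hde'.2.2.symm.coprime_dvd_left hde.1.1).dvd_of_dvd_mul_right ⟨e, h.symm⟩)
      ((hde.2.2.symm.coprime_dvd_left hde'.1.1).dvd_of_dvd_mul_right ⟨e', h⟩)
    subst hdd'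
    have hd0 : 0 < d := Nat.pos_of_dvd_of_pos hde.1.1 (Nat.pos_of_ne_zero hde.1.2)
    rw [Nat.eq_of_mul_eq_mul_left hd0 h]
  have himg : (a.divisors ×ˢ E).image (fun p => p.1 * p.2) ⊆ (a * n).divisors := by
    intro D hD
    obtain ⟨⟨d, e⟩, hde, rfl⟩ := mem_image.mp hD
    simp only [mem_product, mem_filter, Nat.mem_divisors, E] at hde
    exact Nat.mem_divisors.mpr ⟨mul_dvd_mul hde.1.1 hde.2.1.1, mul_ne_zero hde.1.2 hde.2.1.2⟩
  simp only [sigma_eq_sum_div, pow_one]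
  calc (∑ d ∈ a.divisors, a / d) * ∑ e ∈ E, n / e
      = ∑ p ∈ a.divisors ×ˢ E, a * n / (p.1 * p.2) := by
        rw [sum_mul_sum, sum_product]
        refine sum_congr rfl fun d hd => sum_congr rfl fun e he => ?_
        exact Nat.div_mul_div_comm (Nat.dvd_of_mem_divisors hd)
          (Nat.dvd_of_mem_divisors (mem_filter.mp he).1)
    _ = ∑ D ∈ (a.divisors ×ˢ E).image (fun p => p.1 * p.2), a * n / D := (sum_image hinj).symm
    _ ≤ ∑ D ∈ (a * n).divisors, a * n / D := sum_le_sum_of_subset himg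

theorem sigma_one_mul_sum_sum_div_filter_dvd_le (a K : ℕ) :
    sigma 1 a * ∑ e ∈ Icc 1 K with e.Coprime a, ∑ n ∈ Icc 1 K with e ∣ n, n / e
      ≤ ∑ n ∈ Icc 1 K, sigma 1 (a * n) := by
  have hswap : ∑ e ∈ Icc 1 K with e.Coprime a, ∑ n ∈ Icc 1 K with e ∣ n, n / e
      = ∑ n ∈ Icc 1 K, ∑ e ∈ n.divisors with e.Coprime a, n / e := by
    refine sum_comm' fun e n => ?_
    simp only [mem_filter, mem_Icc, Nat.mem_divisors]
    constructor
    · rintro ⟨⟨_, hco⟩, ⟨hn1, hnK⟩, hdvd⟩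
      exact ⟨⟨⟨hdvd, by omega⟩, hco⟩, hn1, hnK⟩
    · rintro ⟨⟨⟨hdvd, _⟩, hco⟩, hn1, hnK⟩
      have he1 := Nat.pos_of_dvd_of_pos hdvd hn1
      exact ⟨⟨⟨he1, (Nat.le_of_dvd hn1 hdvd).trans hnK⟩, hco⟩, ⟨hn1, hnK⟩, hdvd⟩
  rw [hswap, mul_sum]
  exact sum_le_sum fun n _ => sigma_one_mul_sum_div_filter_coprime_le a n

theorem sum_sigma_one_mul_add_le {a k : ℕ} (hk : k.Coprime a) (hka : k < a) (K : ℕ) :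
    ∑ n ∈ Icc 1 K, sigma 1 (a * n + k)
      ≤ ∑ e ∈ Icc 1 K with e.Coprime a, ∑ n ∈ Icc 1 K with e ∣ a * n + k, (a * n + k) / e
        + K * ∑ c ∈ range a with c.Coprime a, c := by
  have hcop (n : ℕ) : (a * n + k).Coprime a := (Nat.coprime_mul_left_add_left k a n).mpr hk
  have hswap : ∑ n ∈ Icc 1 K, ∑ e ∈ Icc 1 K with e ∣ a * n + k, (a * n + k) / e
      = ∑ e ∈ Icc 1 K, ∑ n ∈ Icc 1 K with e ∣ a * n + k, (a * n + k) / e :=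
    sum_comm' fun e n => by simp only [mem_filter]; tauto
  have hcoprime : ∀ e ∈ Icc 1 K,
      ∑ n ∈ Icc 1 K with e ∣ a * n + k, (a * n + k) / e ≠ 0 → e.Coprime a := by
    intro e _ hne
    obtain ⟨n, hn, _⟩ := exists_ne_zero_of_sum_ne_zero hne
    exact (hcop n).coprime_dvd_left (mem_filter.mp hn).2
  calc ∑ n ∈ Icc 1 K, sigma 1 (a * n + k)
      ≤ ∑ n ∈ Icc 1 K, (∑ e ∈ Icc 1 K with e ∣ a * n + k, (a * n + k) / e
          + ∑ c ∈ range a with c.Coprime a, c) := by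
        refine sum_le_sum fun n hn => sigma_one_le_sum_div_filter_dvd_add (hcop n) ?_
        nlinarith [(mem_Icc.mp hn).2]
    _ = _ := by
        rw [sum_add_distrib, hswap, sum_filter_of_ne hcoprime, sum_const, Nat.card_Icc,
          smul_eq_mul, Nat.add_sub_cancel]

theorem sum_sigma_one_thirty_mul_add_lt_of_le_eight :
    ∀ K ≤ 8, ∀ k < 30, Nat.gcd k 30 = 1 → 0 < K →
      ∑ n ∈ Icc 1 K, sigma 1 (30 * n + k) < ∑ n ∈ Icc 1 K, sigma 1 (30 * n) := by
  decide

-- Equality holds at `q = 2`; this is where the constant `51` comes from.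
theorem succ_mul_thirty_mul_succ_sub_one_le (q : ℕ) :
    (q + 1) * (30 * (q + 1) - 1) ≤ 36 * (q * (q + 1)) + 51 := by
  have h : 30 * (q + 1) - 1 = 30 * q + 29 := by omega
  rw [h]
  rcases le_or_gt q 1 with hq | hq
  · interval_cases q <;> norm_num
  · nlinarith

theorem sum_div_filter_dvd_thirty_mul_add_le {e k : ℕ} (he : e.Coprime 30) (he0 : 0 < e)
    (hk30 : k < 30) (K : ℕ) :
    ∑ n ∈ Icc 1 K with e ∣ 30 * n + k, (30 * n + k) / e
      ≤ 72 * ∑ n ∈ Icc 1 K with e ∣ n, n / e + 51 := by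
  have hR := sum_div_filter_dvd_mul_add_le (K := K) he he0 hk30
  have hL := two_mul_sum_Icc_one_id (K / e)
  rw [← sum_div_filter_dvd_eq_sum_Icc he0] at hL
  linarith [succ_mul_thirty_mul_succ_sub_one_le (K / e)]

theorem one_mem_filter_coprime_Icc {K : ℕ} (hK : 0 < K) (a : ℕ) :
    1 ∈ (Icc 1 K).filter (·.Coprime a) :=
  mem_filter.mpr ⟨mem_Icc.mpr ⟨le_rfl, hK⟩, Nat.coprime_one_left a⟩

theorem sum_erase_one_sum_div_filter_dvd_thirty_mul_add_le {k K : ℕ} (hk30 : k < 30) (hK : 0 < K) :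
    ∑ e ∈ ((Icc 1 K).filter (·.Coprime 30)).erase 1,
        ∑ n ∈ Icc 1 K with e ∣ 30 * n + k, (30 * n + k) / e
      ≤ 72 * ∑ e ∈ ((Icc 1 K).filter (·.Coprime 30)).erase 1, ∑ n ∈ Icc 1 K with e ∣ n, n / e
        + 51 * (K - 1) := by
  have hcard : #(((Icc 1 K).filter (·.Coprime 30)).erase 1) ≤ K - 1 := by
    have := (card_filter_le (Icc 1 K) (·.Coprime 30)).trans (Nat.card_Icc 1 K).le
    rw [card_erase_of_mem (one_mem_filter_coprime_Icc hK 30)]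
    omega
  calc _ ≤ ∑ e ∈ ((Icc 1 K).filter (·.Coprime 30)).erase 1,
        (72 * ∑ n ∈ Icc 1 K with e ∣ n, n / e + 51) := by
        refine sum_le_sum fun e he => ?_
        obtain ⟨he1, hco⟩ := mem_filter.mp (mem_of_mem_erase he)
        exact sum_div_filter_dvd_thirty_mul_add_le hco (mem_Icc.mp he1).1 hk30 K
    _ ≤ _ := by
        rw [sum_add_distrib, ← mul_sum, sum_const, smul_eq_mul]
        omega

theorem sum_sigma_one_thirty_mul_ge {K : ℕ} (hK : 0 < K) :
    36 * (K * (K + 1))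
        + 72 * ∑ e ∈ ((Icc 1 K).filter (·.Coprime 30)).erase 1, ∑ n ∈ Icc 1 K with e ∣ n, n / e
      ≤ ∑ n ∈ Icc 1 K, sigma 1 (30 * n) := by
  have h := sigma_one_mul_sum_sum_div_filter_dvd_le 30 K
  rw [← add_sum_erase _ _ (one_mem_filter_coprime_Icc hK 30), (by decide : sigma 1 30 = 72)] at h
  simp only [Nat.one_dvd, filter_true, Nat.div_one] at h
  linarith [two_mul_sum_Icc_one_id K]

theorem sum_sigma_one_thirty_mul_add_le {k K : ℕ} (hk : k.Coprime 30) (hk30 : k < 30)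
    (hK : 0 < K) :
    ∑ n ∈ Icc 1 K, sigma 1 (30 * n + k)
      ≤ 15 * (K * (K + 1)) + K * k
        + 72 * ∑ e ∈ ((Icc 1 K).filter (·.Coprime 30)).erase 1, ∑ n ∈ Icc 1 K with e ∣ n, n / e
        + 51 * (K - 1) + 120 * K := by
  have h := sum_sigma_one_mul_add_le hk hk30 K
  rw [← add_sum_erase _ _ (one_mem_filter_coprime_Icc hK 30),
    (by decide : ∑ c ∈ range 30 with c.Coprime 30, c = 120)] at h
  simp only [Nat.one_dvd, filter_true, Nat.div_one, sum_add_distrib, sum_const,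
    Nat.card_Icc, Nat.add_sub_cancel, smul_eq_mul] at h
  rw [← mul_sum] at h
  linarith [two_mul_sum_Icc_one_id K, sum_erase_one_sum_div_filter_dvd_thirty_mul_add_le hk30 hK]

theorem sigma_sum_30n_gt_general (k : ℕ) (hk2 : k ≤ 29) (hk : Nat.gcd k 30 = 1)
    (K : ℕ) (hK : 0 < K) :
    ∑ n ∈ Finset.Icc 1 K, sigma 1 (30 * n) > ∑ n ∈ Finset.Icc 1 K, sigma 1 (30 * n + k) := by
  rcases le_or_gt K 8 with hK8 | hK8
  · exact sum_sigma_one_thirty_mul_add_lt_of_le_eight K hK8 k (by omega) hk hK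
  have hL := sum_sigma_one_thirty_mul_ge hK
  have hR := sum_sigma_one_thirty_mul_add_le hk (by omega) hK
  have hKk : K * k ≤ K * 29 := Nat.mul_le_mul_left K hk2
  have hKK : K * 9 ≤ K * K := Nat.mul_le_mul_left K hK8
  have hK1 : 51 * (K - 1) + 51 = 51 * K := by omega
  nlinarith

theorem sigma_sum_30n_gt (k : ℕ) (hk1 : 1 ≤ k) (hk2 : k ≤ 29) (hk : Nat.gcd k 30 = 1)
    (K : ℕ) (hK : 0 < K) :
    ∑ n ∈ Finset.Icc 1 K, sigma 1 (30 * n) > ∑ n ∈ Finset.Icc 1 K, sigma 1 (30 * n + k) :=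
  sigma_sum_30n_gt_general k hk2 hk K hK
end

section
/- Let β₀ = 319π²/1080. For every real x ≥ 1000, the quantity g(x) := (∑_{m ≤ x} σ(30m)/(30m)) − β₀·x satisfies −30·log(30x) − 30 < g(x) < 30·log(30x) + 32, where the sum runs over positive integers m ≤ x. -/
open ArithmeticFunction Finset Real
open scoped Nat ArithmeticFunction.sigma

/-!
Write `σ(n)/n = ∑_{d ∣ n} 1/d` and swap the sums: since `d ∣ k m` iff `d / (d, k) ∣ m`,
`∑_{m ≤ N} σ(k m)/(k m) = ∑_{d ≤ k N} ⌊N / (d / (d, k))⌋ / d`. Dropping the floors costs less than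
the harmonic sum `∑_{d ≤ k N} 1/d ≤ 1 + log (k N)` and leaves `N ∑_{d ≤ k N} (d, k)/d²`, which is
within `2` of `β N` for `β = ∑_d (d, k)/d²`, because `(d, k) ≤ k` bounds the tail by
`2k/(kN) = 2/N`. Finally `(d, k) = ∑_{e ∣ (d, k)} φ(e)` gives `β = π²/6 ∑_{e ∣ k} φ(e)/e²`, which
is `319π²/1080` for `k = 30`.
-/

lemma hasSum_ite_dvd_one_div_sq {e : ℕ} (he : e ≠ 0) :
    HasSum (fun n : ℕ => if e ∣ n then 1 / (n : ℝ) ^ 2 else 0) (π ^ 2 / 6 / e ^ 2) := by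
  have hinj : Function.Injective (e * ·) := mul_right_injective₀ he
  rw [← hinj.hasSum_iff]
  · refine (hasSum_zeta_two.div_const ((e : ℝ) ^ 2)).congr_fun fun n => ?_
    simp only [Function.comp_apply, dvd_mul_right, if_true, Nat.cast_mul, mul_pow]
    ring
  · rintro n hn
    rw [if_neg]
    rintro ⟨m, rfl⟩
    exact hn ⟨m, rfl⟩

lemma cast_gcd_eq_sum_totient {k : ℕ} (hk : k ≠ 0) (n : ℕ) :
    (n.gcd k : ℝ) = ∑ e ∈ k.divisors, if e ∣ n then (φ e : ℝ) else 0 := by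
  have hdivisors : (n.gcd k).divisors = {e ∈ k.divisors | e ∣ n} := by
    ext e
    simp only [Nat.mem_divisors, Nat.dvd_gcd_iff, ne_eq, Nat.gcd_eq_zero_iff, hk, and_false,
      not_false_eq_true, and_true, mem_filter]
    tauto
  rw [← sum_filter, ← hdivisors, ← Nat.cast_sum, Nat.sum_totient]

lemma hasSum_gcd_div_sq {k : ℕ} (hk : k ≠ 0) :
    HasSum (fun d : ℕ => (d.gcd k : ℝ) / d ^ 2)
      (π ^ 2 / 6 * ∑ e ∈ k.divisors, (φ e : ℝ) / e ^ 2) := by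
  have hterm : ∀ e ∈ k.divisors,
      HasSum (fun d : ℕ => (φ e : ℝ) * if e ∣ d then 1 / (d : ℝ) ^ 2 else 0)
      ((φ e : ℝ) * (π ^ 2 / 6 / e ^ 2)) := fun e he =>
    (hasSum_ite_dvd_one_div_sq (Nat.pos_of_mem_divisors he).ne').mul_left _
  have hvalue : π ^ 2 / 6 * ∑ e ∈ k.divisors, (φ e : ℝ) / e ^ 2 =
      ∑ e ∈ k.divisors, (φ e : ℝ) * (π ^ 2 / 6 / e ^ 2) := by
    rw [mul_sum]
    exact sum_congr rfl fun e _ => by ring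
  rw [hvalue]
  refine (hasSum_sum hterm).congr_fun fun d => ?_
  rw [cast_gcd_eq_sum_totient hk, sum_div]
  refine sum_congr rfl fun e _ => ?_
  split_ifs <;> simp [div_eq_mul_inv]

lemma pi_sq_div_six_mul_sum_totient_div_sq_thirty :
    π ^ 2 / 6 * ∑ e ∈ (30 : ℕ).divisors, (φ e : ℝ) / e ^ 2 = 319 * π ^ 2 / 1080 := by
  rw [show (30 : ℕ).divisors = {1, 2, 3, 5, 6, 10, 15, 30} by decide]
  have htotient : φ 2 = 1 ∧ φ 3 = 2 ∧ φ 5 = 4 ∧ φ 6 = 2 ∧ φ 10 = 4 ∧ φ 15 = 8 ∧ φ 30 = 8 := by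
    decide
  simp only [mem_insert, OfNat.one_ne_ofNat, mem_singleton, or_self, not_false_eq_true, sum_insert,
    Nat.totient_one, Nat.cast_one, one_pow, ne_eq, one_ne_zero, div_self, Nat.reduceEqDiff,
    htotient, Nat.cast_ofNat, one_div, sum_singleton]
  ring

lemma dvd_mul_iff_div_gcd_dvd {d k m : ℕ} (hk : k ≠ 0) : d ∣ k * m ↔ d / d.gcd k ∣ m := by
  rw [Nat.div_dvd_iff_dvd_mul (Nat.gcd_dvd_left d k) (Nat.gcd_pos_of_pos_right d hk.bot_lt),
    ← dvd_gcd_mul_iff_dvd_mul]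
  rfl

lemma card_filter_dvd_mul {k : ℕ} (hk : k ≠ 0) (N d : ℕ) :
    #{m ∈ Icc 1 N | d ∣ k * m} = N / (d / d.gcd k) := by
  simp_rw [dvd_mul_iff_div_gcd_dvd hk]
  rw [← zero_add 1, Icc_add_one_left_eq_Ioc, Nat.Ioc_filter_dvd_card_eq_div]

lemma sigma_one_div_eq_sum_divisors (n : ℕ) :
    (σ 1 n : ℝ) / n = ∑ d ∈ n.divisors, 1 / (d : ℝ) := by
  rw [← Nat.sum_div_divisors n, sigma_one_apply, Nat.cast_sum, sum_div]
  refine sum_congr rfl fun d hd => ?_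
  rw [Nat.cast_div (Nat.dvd_of_mem_divisors hd)
    (by exact_mod_cast (Nat.pos_of_mem_divisors hd).ne'), one_div_div]

lemma divisors_eq_filter_dvd_Icc {n M : ℕ} (hn : n ≠ 0) (hM : n ≤ M) :
    n.divisors = {d ∈ Icc 1 M | d ∣ n} := by
  ext d
  simp only [Nat.mem_divisors, mem_filter, mem_Icc, hn, ne_eq, not_false_eq_true, and_true]
  exact ⟨fun hd => ⟨⟨Nat.pos_of_dvd_of_pos hd hn.bot_lt, (Nat.le_of_dvd hn.bot_lt hd).trans hM⟩,
    hd⟩, And.right⟩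

lemma sum_sigma_one_div_eq {k : ℕ} (hk : k ≠ 0) (N : ℕ) :
    ∑ m ∈ Icc 1 N, (σ 1 (k * m) : ℝ) / (k * m) =
      ∑ d ∈ Icc 1 (k * N), ((N / (d / d.gcd k) : ℕ) : ℝ) / d := by
  have hdivisors : ∀ m ∈ Icc 1 N,
      (σ 1 (k * m) : ℝ) / (k * m) = ∑ d ∈ Icc 1 (k * N), if d ∣ k * m then 1 / (d : ℝ) else 0 := by
    intro m hm
    rw [mem_Icc] at hm
    have hkm : k * m ≠ 0 := mul_ne_zero hk (by omega)
    rw [← Nat.cast_mul, sigma_one_div_eq_sum_divisors,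
      divisors_eq_filter_dvd_Icc hkm (Nat.mul_le_mul_left k hm.2), sum_filter]
  rw [sum_congr rfl hdivisors, sum_comm]
  refine sum_congr rfl fun d _ => ?_
  rw [← sum_filter, sum_const, card_filter_dvd_mul hk, nsmul_eq_mul, mul_one_div]

lemma cast_div_div_gcd_div_bounds {d : ℕ} (hd : d ≠ 0) (k N : ℕ) :
    N * ((d.gcd k : ℝ) / d ^ 2) - 1 / d < ((N / (d / d.gcd k) : ℕ) : ℝ) / d ∧
      ((N / (d / d.gcd k) : ℕ) : ℝ) / d ≤ N * ((d.gcd k : ℝ) / d ^ 2) := by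
  have hg : (d.gcd k : ℝ) ≠ 0 := by exact_mod_cast (Nat.gcd_pos_of_pos_left k hd.bot_lt).ne'
  have hdR : (0 : ℝ) < d := by exact_mod_cast hd.bot_lt
  have hq : N * ((d.gcd k : ℝ) / d ^ 2) = (N : ℝ) / ((d / d.gcd k : ℕ) : ℝ) / d := by
    rw [Nat.cast_div (Nat.gcd_dvd_left d k) hg]
    field_simp
  rw [hq, ← Nat.floor_div_eq_div (K := ℝ) N (d / d.gcd k), ← sub_div]
  have hq_nonneg : (0 : ℝ) ≤ N / ((d / d.gcd k : ℕ) : ℝ) := by positivity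
  exact ⟨div_lt_div_of_pos_right (Nat.sub_one_lt_floor _) hdR,
    div_le_div_of_nonneg_right (Nat.floor_le hq_nonneg) hdR.le⟩

lemma tsum_gcd_div_sq_le {k : ℕ} (hk : k ≠ 0) (M : ℕ) :
    ∑' d : ℕ, (d.gcd k : ℝ) / d ^ 2 ≤ ∑ d ∈ Icc 1 M, (d.gcd k : ℝ) / d ^ 2 + 2 * k / (M + 1) := by
  set f : ℕ → ℝ := fun d => (d.gcd k : ℝ) / d ^ 2
  have hf_nonneg : ∀ d, 0 ≤ f d := fun d => by positivity
  have hf_le : ∀ d, f d ≤ k * (d ^ 2 : ℝ)⁻¹ := fun d => by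
    simp only [f, div_eq_mul_inv]
    gcongr
    exact_mod_cast Nat.le_of_dvd hk.bot_lt (Nat.gcd_dvd_right d k)
  have hhead : ∑ d ∈ range (M + 1), f d = ∑ d ∈ Icc 1 M, f d := by
    rw [Nat.range_succ_eq_Icc_zero, ← insert_Icc_add_one_left_eq_Icc (Nat.zero_le M),
      sum_insert (by simp)]
    simp [f]
  refine Real.tsum_le_of_sum_range_le hf_nonneg fun n => ?_
  calc ∑ d ∈ range n, f d ≤ ∑ d ∈ range (M + 1 + n), f d :=
        sum_le_sum_of_subset_of_nonneg (range_mono (by omega)) fun d _ _ => hf_nonneg d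
    _ = ∑ d ∈ Icc 1 M, f d + ∑ d ∈ Ioo M (M + 1 + n), f d := by
        rw [← sum_range_add_sum_Ico _ (by omega : M + 1 ≤ M + 1 + n), hhead,
          Ico_add_one_left_eq_Ioo]
    _ ≤ ∑ d ∈ Icc 1 M, f d + k * ∑ d ∈ Ioo M (M + 1 + n), (d ^ 2 : ℝ)⁻¹ := by
        rw [mul_sum]
        gcongr with d
        exact hf_le d
    _ ≤ ∑ d ∈ Icc 1 M, f d + k * (2 / (M + 1)) := by
        gcongr
        exact sum_Ioo_inv_sq_le _ _
    _ = ∑ d ∈ Icc 1 M, f d + 2 * k / (M + 1) := by ring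

theorem sum_sigma_one_div_bounds {k N : ℕ} (hk : k ≠ 0) (hN : N ≠ 0) {β : ℝ}
    (hβ : HasSum (fun d : ℕ => (d.gcd k : ℝ) / d ^ 2) β) :
    β * N - 3 - Real.log (k * N) < ∑ m ∈ Icc 1 N, (σ 1 (k * m) : ℝ) / (k * m) ∧
      ∑ m ∈ Icc 1 N, (σ 1 (k * m) : ℝ) / (k * m) ≤ β * N := by
  set f : ℕ → ℝ := fun d => (d.gcd k : ℝ) / d ^ 2
  set P := ∑ d ∈ Icc 1 (k * N), f d
  have hNR : (0 : ℝ) < N := Nat.cast_pos.2 hN.bot_lt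
  have hP_le : P ≤ β := sum_le_hasSum _ (fun d _ => by positivity) hβ
  have hNP_ge : β * N - 2 ≤ N * P := by
    have htail := tsum_gcd_div_sq_le hk (k * N)
    rw [hβ.tsum_eq] at htail
    have hsmall : 2 * k / ((k * N : ℕ) + 1 : ℝ) * N ≤ 2 := by
      rw [div_mul_eq_mul_div, div_le_iff₀ (by positivity)]
      push_cast
      linarith
    nlinarith [mul_le_mul_of_nonneg_right htail hNR.le]
  have hharmonic : ∑ d ∈ Icc 1 (k * N), 1 / (d : ℝ) ≤ 1 + Real.log (k * N) := by
    have h := harmonic_le_one_add_log (k * N)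
    simpa [harmonic_eq_sum_Icc] using h
  have hd0 : ∀ d ∈ Icc 1 (k * N), d ≠ 0 := fun d hd => Nat.one_le_iff_ne_zero.1 (mem_Icc.1 hd).1
  rw [sum_sigma_one_div_eq hk]
  constructor
  · calc β * N - 3 - Real.log (k * N) ≤ N * P - ∑ d ∈ Icc 1 (k * N), 1 / (d : ℝ) := by linarith
      _ = ∑ d ∈ Icc 1 (k * N), (N * f d - 1 / d) := by rw [mul_sum, sum_sub_distrib]
      _ < _ := sum_lt_sum_of_nonempty
          (nonempty_Icc.2 (Nat.one_le_iff_ne_zero.2 (mul_ne_zero hk hN)))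
          fun d hd => (cast_div_div_gcd_div_bounds (hd0 d hd) k N).1
  · calc _ ≤ ∑ d ∈ Icc 1 (k * N), N * f d :=
          sum_le_sum fun d hd => (cast_div_div_gcd_div_bounds (hd0 d hd) k N).2
      _ = N * P := (mul_sum ..).symm
      _ ≤ β * N := by nlinarith

theorem g_bounds (x : ℝ) (hx : x ≥ 1000) :
    -30 * Real.log (30 * x) - 30 <
      (∑ m ∈ Finset.Icc 1 ⌊x⌋₊, (sigma 1 (30 * m) : ℝ) / (30 * m)) - (319 * π ^ 2 / 1080) * x ∧
    (∑ m ∈ Finset.Icc 1 ⌊x⌋₊, (sigma 1 (30 * m) : ℝ) / (30 * m)) - (319 * π ^ 2 / 1080) * x <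
      30 * Real.log (30 * x) + 32 := by
  have hN : 0 < ⌊x⌋₊ := Nat.floor_pos.2 (by linarith)
  have hβ := hasSum_gcd_div_sq (k := 30) (by norm_num)
  rw [pi_sq_div_six_mul_sum_totient_div_sq_thirty] at hβ
  obtain ⟨hlo, hhi⟩ := sum_sigma_one_div_bounds (by norm_num) hN.ne' hβ
  push_cast at hlo hhi
  have hfloor_le : (⌊x⌋₊ : ℝ) ≤ x := Nat.floor_le (by linarith)
  have hlt_floor : x < ⌊x⌋₊ + 1 := Nat.lt_floor_add_one x
  have hlog_le : Real.log (30 * ⌊x⌋₊) ≤ Real.log (30 * x) :=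
    log_le_log (mul_pos (by norm_num) (Nat.cast_pos.2 hN)) (by linarith)
  have hlog_pos : 0 < Real.log (30 * x) := log_pos (by linarith)
  have hβ_le : 319 * π ^ 2 / 1080 ≤ 5 := by nlinarith [pi_le_four, pi_pos]
  have hβ_nonneg : 0 ≤ 319 * π ^ 2 / 1080 := by positivity
  constructor
  · nlinarith [mul_le_mul_of_nonneg_left hlt_floor.le hβ_nonneg]
  · nlinarith [mul_le_mul_of_nonneg_left hfloor_le hβ_nonneg]
end

section
/- Let k be an integer with 1 ≤ k ≤ 29 and gcd(k, 30) = 1, and let β_k = 8π²/75. For every real x ≥ 1000, the quantity h_k(x) := (∑_{m ≤ x} σ(30m+k)/(30m+k)) − β_k·x satisfies −log(30x + k) − 1 < h_k(x) < log(30x + k) + 2, where the sum runs over positive integers m ≤ x. -/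
/-!
Since σ(n)/n = ∑_{d ∣ n} 1/d, swapping the sums writes the left-hand side as ∑_{d ≤ D} c_d / d,
where N = ⌊x⌋, D = 30N + k and c_d counts the m ≤ N with d ∣ 30m + k. As gcd(k, 30) = 1, such
m exist only for d coprime to 30, and then they form one residue class mod d, so
|c_d - N/d| ≤ 1. The main terms add up to
N ∑_{(d,30)=1} 1/d² = N ζ(2) (1 - 1/4)(1 - 1/9)(1 - 1/25) = (8π²/75) N
up to a tail of at most 2N/(D + 1) ≤ 1/15, and the errors to at most
∑_{d ≤ D, d odd} 1/d ≤ 3/2 + (log D)/2. Passing from N to x costs at most β_k < 1.06, and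
log(30x + k) ≥ 4 absorbs the constants.
-/

open ArithmeticFunction Finset Real

noncomputable def invSqCoprime (q n : ℕ) : ℝ := if n.Coprime q then 1 / (n : ℝ) ^ 2 else 0

lemma invSqCoprime_nonneg (q n : ℕ) : 0 ≤ invSqCoprime q n := by
  unfold invSqCoprime; split_ifs <;> positivity

lemma invSqCoprime_le (q n : ℕ) : invSqCoprime q n ≤ 1 / (n : ℝ) ^ 2 := by
  unfold invSqCoprime; split_ifs <;> first | rfl | positivity

lemma invSqCoprime_mul_left {p q : ℕ} (hpq : p.Coprime q) (n : ℕ) :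
    invSqCoprime q (p * n) = invSqCoprime q n / (p : ℝ) ^ 2 := by
  have hcop : (p * n).Coprime q ↔ n.Coprime q := by
    rw [Nat.coprime_mul_iff_left, and_iff_right hpq]
  simp only [invSqCoprime, hcop]
  split_ifs
  · push_cast; ring
  · simp

lemma invSqCoprime_prime_mul {p q : ℕ} (hp : p.Prime) (n : ℕ) :
    invSqCoprime (p * q) n = invSqCoprime q n - if p ∣ n then invSqCoprime q n else 0 := by
  have hnp : n.Coprime p ↔ ¬p ∣ n := Nat.coprime_comm.trans hp.coprime_iff_not_dvd
  by_cases hpn : p ∣ n <;> simp [invSqCoprime, Nat.coprime_mul_iff_right, hnp, hpn]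

lemma hasSum_invSqCoprime_one : HasSum (invSqCoprime 1) (π ^ 2 / 6) := by
  convert hasSum_zeta_two using 2 with n
  simp [invSqCoprime]

lemma hasSum_invSqCoprime_prime_mul {p q : ℕ} {s : ℝ} (hp : p.Prime) (hpq : ¬p ∣ q)
    (h : HasSum (invSqCoprime q) s) :
    HasSum (invSqCoprime (p * q)) (s * (1 - 1 / (p : ℝ) ^ 2)) := by
  have hmul : HasSum (fun n => if p ∣ n then invSqCoprime q n else 0) (s / (p : ℝ) ^ 2) := by
    refine ((mul_right_injective₀ hp.ne_zero).hasSum_iff ?_).mp ?_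
    · rintro n hn
      rw [if_neg]
      rintro ⟨j, rfl⟩
      exact hn ⟨j, rfl⟩
    · have hcomp : (fun n => if p ∣ n then invSqCoprime q n else 0) ∘ (p * ·) =
          fun n => invSqCoprime q n / (p : ℝ) ^ 2 := by
        funext n
        rw [Function.comp_apply, if_pos (dvd_mul_right p n),
          invSqCoprime_mul_left (hp.coprime_iff_not_dvd.mpr hpq)]
      rw [hcomp]
      exact h.div_const _
  rw [show s * (1 - 1 / (p : ℝ) ^ 2) = s - s / p ^ 2 by ring,
    funext (invSqCoprime_prime_mul (q := q) hp)]
  exact h.sub hmul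

lemma hasSum_invSqCoprime_thirty : HasSum (invSqCoprime 30) (8 * π ^ 2 / 75) := by
  have h2 := hasSum_invSqCoprime_prime_mul Nat.prime_two (by norm_num) hasSum_invSqCoprime_one
  have h6 := hasSum_invSqCoprime_prime_mul Nat.prime_three (by norm_num) h2
  have h30 := hasSum_invSqCoprime_prime_mul Nat.prime_five (by norm_num) h6
  convert h30 using 1
  push_cast
  ring

lemma sub_two_div_le_sum_Icc_of_hasSum {g : ℕ → ℝ} {s : ℝ} (hs : HasSum g s)
    (hg0 : ∀ n, 0 ≤ g n) (hg : ∀ n, g n ≤ 1 / (n : ℝ) ^ 2) (D : ℕ) :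
    s - 2 / (D + 1) ≤ ∑ n ∈ Icc 1 D, g n := by
  have htail := (hasSum_nat_add_iff' (D + 1)).mpr hs
  have hpartial : ∀ M, ∑ i ∈ range M, g (i + (D + 1)) ≤ 2 / (D + 1) := by
    intro M
    calc ∑ i ∈ range M, g (i + (D + 1))
        ≤ ∑ i ∈ range M, (((i + (D + 1) : ℕ) : ℝ) ^ 2)⁻¹ :=
          sum_le_sum fun i _ => by simpa using hg (i + (D + 1))
      _ = ∑ j ∈ Ioo D (M + (D + 1)), ((j : ℝ) ^ 2)⁻¹ := by
          rw [range_eq_Ico, sum_Ico_add' (fun j : ℕ => ((j : ℝ) ^ 2)⁻¹), zero_add,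
            Ico_add_one_left_eq_Ioo]
      _ ≤ 2 / (D + 1) := sum_Ioo_inv_sq_le D _
  -- `hg 0` reads `g 0 ≤ 1 / 0 = 0`.
  have hzero : g 0 = 0 := le_antisymm (by simpa using hg 0) (hg0 0)
  have hsplit : ∑ n ∈ range (D + 1), g n = ∑ n ∈ Icc 1 D, g n := by
    rw [range_eq_Ico, sum_eq_sum_Ico_succ_bot (Nat.succ_pos D), hzero, zero_add]
    rfl
  have := le_of_tendsto' htail.tendsto_sum_nat hpartial
  linarith

lemma sum_filter_odd_one_div_le (D : ℕ) :
    ∑ d ∈ Icc 1 D with Odd d, 1 / (d : ℝ) ≤ 3 / 2 + Real.log D / 2 := by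
  have hsub : {d ∈ Icc 1 D | Odd d} ⊆ (range (D / 2 + 1)).image (fun j : ℕ => 2 * j + 1) := by
    intro d hd
    simp only [mem_filter, mem_Icc] at hd
    obtain ⟨⟨-, hdD⟩, j, rfl⟩ := hd
    exact mem_image.mpr ⟨j, mem_range.mpr (by omega), rfl⟩
  have hinj : Set.InjOn (fun j : ℕ => 2 * j + 1) (range (D / 2 + 1) : Set ℕ) :=
    fun i _ j _ hij => by simp only at hij; omega
  have hhalf : ∀ j ∈ range (D / 2),
      1 / ((2 * (j + 1) + 1 : ℕ) : ℝ) ≤ 1 / 2 * (1 / ((j : ℝ) + 1)) := by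
    intro j _
    rw [one_div_mul_one_div]
    apply one_div_le_one_div_of_le (by positivity)
    push_cast
    linarith
  calc ∑ d ∈ Icc 1 D with Odd d, 1 / (d : ℝ)
      ≤ ∑ d ∈ (range (D / 2 + 1)).image (fun j : ℕ => 2 * j + 1), 1 / (d : ℝ) :=
        sum_le_sum_of_subset_of_nonneg hsub fun _ _ _ => by positivity
    _ = ∑ j ∈ range (D / 2), 1 / ((2 * (j + 1) + 1 : ℕ) : ℝ) + 1 := by
        rw [sum_image hinj, sum_range_succ']
        norm_num
    _ ≤ 1 / 2 * ∑ j ∈ range D, 1 / ((j : ℝ) + 1) + 1 := by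
        rw [mul_sum]
        gcongr
        exact (sum_le_sum hhalf).trans (sum_le_sum_of_subset_of_nonneg
          (range_subset_range.mpr (Nat.div_le_self D 2)) fun _ _ _ => by positivity)
    _ ≤ 3 / 2 + Real.log D / 2 := by
        have h := harmonic_le_one_add_log D
        push_cast [harmonic] at h
        simp only [one_div]
        linarith

lemma Nat.exists_modEq_iff_dvd_mul_add {a d : ℕ} [NeZero d] (h : a.Coprime d) (b : ℕ) :
    ∃ v, ∀ m, d ∣ a * m + b ↔ m ≡ v [MOD d] := by
  set u := ZMod.unitOfCoprime a h
  refine ⟨(↑u⁻¹ * -(b : ZMod d)).val, fun m => ?_⟩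
  rw [← ZMod.natCast_eq_natCast_iff, ZMod.natCast_zmod_val, ← ZMod.natCast_eq_zero_iff,
    Units.eq_inv_mul_iff_mul_eq, ZMod.coe_unitOfCoprime, eq_neg_iff_add_eq_zero]
  push_cast
  rfl

lemma card_filter_dvd_mul_add_mem_Icc {a b d : ℕ} (h : a.Coprime d) (hd : 0 < d) (N : ℕ) :
    #{m ∈ range N | d ∣ a * m + b} ∈ Icc (N / d) (N / d + 1) := by
  have : NeZero d := ⟨hd.ne'⟩
  obtain ⟨v, hv⟩ := Nat.exists_modEq_iff_dvd_mul_add h b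
  simp_rw [hv, ← Nat.count_eq_card_filter_range, Nat.count_modEq_card N hd, mem_Icc]
  split_ifs <;> omega

lemma abs_card_filter_dvd_div_sub_le {a b d : ℕ} (hb : b.Coprime a) (hd : 0 < d) (N : ℕ) :
    |(#{m ∈ range N | d ∣ a * m + b} : ℝ) / d - N * invSqCoprime a d| ≤
      if d.Coprime a then 1 / (d : ℝ) else 0 := by
  split_ifs with hda
  · obtain ⟨hlo, hhi⟩ := mem_Icc.mp (card_filter_dvd_mul_add_mem_Icc (b := b) hda.symm hd N)
    have hd' : (0 : ℝ) < d := by exact_mod_cast hd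
    have hfloor : (N : ℝ) / d < (N / d : ℕ) + 1 := by
      rw [← Nat.floor_div_eq_div (K := ℝ)]
      exact Nat.lt_floor_add_one _
    have hlo' : (N : ℝ) / d - 1 ≤ #{m ∈ range N | d ∣ a * m + b} := by
      have := (Nat.cast_le (α := ℝ)).mpr hlo
      linarith
    have hhi' : (#{m ∈ range N | d ∣ a * m + b} : ℝ) ≤ N / d + 1 := by
      have := (Nat.cast_le (α := ℝ)).mpr hhi
      push_cast at this
      linarith [Nat.cast_div_le (α := ℝ) (m := N) (n := d)]
    have hsplit : ∀ c : ℝ, c / d - N * (1 / (d : ℝ) ^ 2) = (c - N / d) / d := fun c => by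
      field_simp
    rw [invSqCoprime, if_pos hda, hsplit, abs_div, abs_of_pos hd']
    gcongr
    exact abs_sub_le_iff.mpr ⟨by linarith, by linarith⟩
  · have hempty : {m ∈ range N | d ∣ a * m + b} = ∅ :=
      filter_eq_empty_iff.mpr fun m _ hdvd => hda <| Nat.Coprime.coprime_dvd_left hdvd <| by
        rwa [add_comm, Nat.coprime_add_mul_left_left]
    simp [hempty, invSqCoprime, hda]

lemma sigma_one_div_eq_sum_inv {n : ℕ} (hn : 0 < n) :
    (sigma 1 n : ℝ) / n = ∑ d ∈ n.divisors, 1 / (d : ℝ) := by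
  rw [sigma_one_apply, Nat.cast_sum, sum_div, ← Nat.sum_div_divisors n (fun d => 1 / (d : ℝ))]
  refine sum_congr rfl fun d hd => ?_
  have hd0 : (d : ℝ) ≠ 0 := by exact_mod_cast (Nat.pos_of_mem_divisors hd).ne'
  rw [Nat.cast_div (Nat.dvd_of_mem_divisors hd) hd0]
  field_simp

lemma sum_sigma_one_div_eq_sum_card {s : Finset ℕ} {f : ℕ → ℕ} {D : ℕ}
    (hf : ∀ m ∈ s, 0 < f m ∧ f m ≤ D) :
    ∑ m ∈ s, (sigma 1 (f m) : ℝ) / f m =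
      ∑ d ∈ Icc 1 D, (#{m ∈ s | d ∣ f m} : ℝ) / d := by
  have hdiv : ∀ m ∈ s, (f m).divisors = {d ∈ Icc 1 D | d ∣ f m} := fun m hm => by
    obtain ⟨hpos, hle⟩ := hf m hm
    ext d
    simp only [Nat.mem_divisors, mem_filter, mem_Icc]
    constructor
    · rintro ⟨hd, -⟩
      exact ⟨⟨Nat.pos_of_dvd_of_pos hd hpos, (Nat.le_of_dvd hpos hd).trans hle⟩, hd⟩
    · rintro ⟨-, hd⟩
      exact ⟨hd, hpos.ne'⟩
  calc ∑ m ∈ s, (sigma 1 (f m) : ℝ) / f m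
      = ∑ m ∈ s, ∑ d ∈ Icc 1 D with d ∣ f m, 1 / (d : ℝ) :=
        sum_congr rfl fun m hm => by rw [sigma_one_div_eq_sum_inv (hf m hm).1, hdiv m hm]
    _ = ∑ d ∈ Icc 1 D, ∑ m ∈ s with d ∣ f m, 1 / (d : ℝ) :=
        sum_comm' fun m d => by simp only [mem_filter]; tauto
    _ = ∑ d ∈ Icc 1 D, (#{m ∈ s | d ∣ f m} : ℝ) / d := by
        simp only [sum_const, nsmul_eq_mul, mul_one_div]

lemma abs_sum_range_sigma_one_div_sub_le {a b : ℕ} (hb : b.Coprime a) (hb0 : 0 < b)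
    {N D : ℕ} (hD : ∀ m < N, a * m + b ≤ D) :
    |∑ m ∈ range N, (sigma 1 (a * m + b) : ℝ) / (a * m + b : ℕ) -
        N * ∑ d ∈ Icc 1 D, invSqCoprime a d| ≤
      ∑ d ∈ Icc 1 D with d.Coprime a, 1 / (d : ℝ) := by
  rw [sum_sigma_one_div_eq_sum_card fun m hm =>
      ⟨Nat.add_pos_right _ hb0, hD m (mem_range.mp hm)⟩,
    mul_sum, ← sum_sub_distrib, sum_filter]
  exact (abs_sum_le_sum_abs _ _).trans
    (sum_le_sum fun d hd => abs_card_filter_dvd_div_sub_le hb (mem_Icc.mp hd).1 N)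

theorem abs_sum_Icc_sigma_one_div_sub_le {a b : ℕ} (hb : b.Coprime a) {N D : ℕ}
    (hD : a * N + b ≤ D) :
    |∑ m ∈ Icc 1 N, (sigma 1 (a * m + b) : ℝ) / (a * m + b : ℕ) -
        N * ∑ d ∈ Icc 1 D, invSqCoprime a d| ≤
      ∑ d ∈ Icc 1 D with d.Coprime a, 1 / (d : ℝ) := by
  have hshift : ∀ m, a * (1 + m) + b = a * m + (b + a) := fun m => by ring
  have hba : 0 < b + a := Nat.pos_of_ne_zero fun h0 => by
    obtain ⟨rfl, rfl⟩ := Nat.add_eq_zero_iff.mp h0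
    exact absurd hb (by decide)
  rw [← Ico_add_one_right_eq_Icc, sum_Ico_eq_sum_range, Nat.add_sub_cancel]
  simp_rw [hshift]
  exact abs_sum_range_sigma_one_div_sub_le (Nat.coprime_add_self_left.mpr hb) hba
    fun m hm => by nlinarith

lemma sum_filter_coprime_thirty_one_div_le (D : ℕ) :
    ∑ d ∈ Icc 1 D with d.Coprime 30, 1 / (d : ℝ) ≤ 3 / 2 + Real.log D / 2 :=
  (sum_le_sum_of_subset_of_nonneg (monotone_filter_right _ fun _ _ hd =>
      (Nat.Coprime.coprime_dvd_right (by norm_num : 2 ∣ 30) hd).odd_of_right)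
    fun _ _ _ => by positivity).trans (sum_filter_odd_one_div_le D)

theorem abs_sum_sigma_thirty_sub_le {k : ℕ} (hk : k.Coprime 30) (N : ℕ) :
    |∑ m ∈ Icc 1 N, (sigma 1 (30 * m + k) : ℝ) / (30 * m + k) - 8 * π ^ 2 / 75 * N| ≤
      8 / 5 + Real.log (30 * N + k) / 2 := by
  set D := 30 * N + k with hD
  set A := ∑ d ∈ Icc 1 D, invSqCoprime 30 d
  have hmain := abs_le.mp (abs_sum_Icc_sigma_one_div_sub_le hk hD.ge)
  have hA_le : A ≤ 8 * π ^ 2 / 75 :=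
    sum_le_hasSum _ (fun n _ => invSqCoprime_nonneg 30 n) hasSum_invSqCoprime_thirty
  have hA_ge : 8 * π ^ 2 / 75 - 2 / (D + 1) ≤ A := sub_two_div_le_sum_Icc_of_hasSum
    hasSum_invSqCoprime_thirty (invSqCoprime_nonneg 30) (invSqCoprime_le 30) D
  have hNA_le := mul_le_mul_of_nonneg_left hA_le (Nat.cast_nonneg (α := ℝ) N)
  have hNA_ge := mul_le_mul_of_nonneg_left hA_ge (Nat.cast_nonneg (α := ℝ) N)
  have hND : N * (2 / (D + 1 : ℝ)) ≤ 1 / 15 := by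
    rw [mul_div_assoc', div_le_div_iff₀ (by positivity) (by norm_num), hD]
    push_cast
    linarith
  have hH := sum_filter_coprime_thirty_one_div_le D
  rw [hD] at hH
  push_cast at hmain hH
  rw [abs_le]
  constructor <;> linarith [hmain.1, hmain.2]

lemma four_le_log {y : ℝ} (hy : 81 ≤ y) : 4 ≤ Real.log y := by
  rw [Real.le_log_iff_exp_le (by positivity)]
  have h81 : Real.exp 4 < 3 ^ 4 := by
    rw [show (4 : ℝ) = (4 : ℕ) by norm_num, ← Real.exp_one_pow]
    exact pow_lt_pow_left₀ Real.exp_one_lt_three (Real.exp_pos 1).le (by norm_num)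
  linarith

theorem h_bounds_general (k : ℕ) (hk : Nat.gcd k 30 = 1)
    (x : ℝ) (hx : x ≥ 1000) :
    -Real.log (30 * x + k) - 1 <
      (∑ m ∈ Finset.Icc 1 ⌊x⌋₊, (sigma 1 (30 * m + k) : ℝ) / (30 * m + k)) -
        (8 * π ^ 2 / 75) * x ∧
    (∑ m ∈ Finset.Icc 1 ⌊x⌋₊, (sigma 1 (30 * m + k) : ℝ) / (30 * m + k)) -
        (8 * π ^ 2 / 75) * x <
      Real.log (30 * x + k) + 2 := by
  set N := ⌊x⌋₊
  have hNx : (N : ℝ) ≤ x := Nat.floor_le (by linarith)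
  have hxN : x < N + 1 := Nat.lt_floor_add_one x
  have hk0 : (0 : ℝ) ≤ k := Nat.cast_nonneg k
  have hsum := abs_le.mp (abs_sum_sigma_thirty_sub_le hk N)
  have hlog : Real.log (30 * N + k) ≤ Real.log (30 * x + k) :=
    Real.log_le_log (by linarith) (by linarith)
  have hL := four_le_log (show 81 ≤ 30 * x + k by linarith)
  have hβ : 8 * π ^ 2 / 75 < 1.06 := by nlinarith [pi_lt_d2, pi_pos]
  have hβx : 0 ≤ 8 * π ^ 2 / 75 * (x - N) ∧ 8 * π ^ 2 / 75 * (x - N) ≤ 8 * π ^ 2 / 75 :=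
    ⟨by nlinarith [pi_pos], by nlinarith [pi_pos]⟩
  constructor <;> linarith [hsum.1, hsum.2]

theorem h_bounds (k : ℕ) (hk1 : 1 ≤ k) (hk2 : k ≤ 29) (hk : Nat.gcd k 30 = 1)
    (x : ℝ) (hx : x ≥ 1000) :
    -Real.log (30 * x + k) - 1 <
      (∑ m ∈ Finset.Icc 1 ⌊x⌋₊, (sigma 1 (30 * m + k) : ℝ) / (30 * m + k)) -
        (8 * π ^ 2 / 75) * x ∧
    (∑ m ∈ Finset.Icc 1 ⌊x⌋₊, (sigma 1 (30 * m + k) : ℝ) / (30 * m + k)) -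
        (8 * π ^ 2 / 75) * x <
      Real.log (30 * x + k) + 2 :=
  h_bounds_general k hk x hx
end

section
/- Let β₀ = 319π²/1080. For every real x ≥ 1000, ∑_{m ≤ x} σ(30m) > 15·β₀·x² − 2000·x·log(30x), where the sum runs over positive integers m ≤ x. -/
open ArithmeticFunction Finset Real

lemma basel_partial (M : ℕ) (hM : 1 ≤ M) :
    π ^ 2 / 6 ≤ (∑ j ∈ Finset.Icc 1 M, (1:ℝ)/(j:ℝ)^2) + 1/M := by
  set c : ℝ := (∑ j ∈ Finset.Icc 1 M, (1:ℝ)/(j:ℝ)^2) + 1/M with hc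
  have key : ∀ L, M + 1 ≤ L → ∑ n ∈ Finset.range L, (1:ℝ)/(n:ℝ)^2 ≤ c - 1/(L-1 : ℕ) := by
    intro L hL
    induction L, hL using Nat.le_induction with
    | base =>
      have h1 : ∑ n ∈ Finset.range (M+1), (1:ℝ)/(n:ℝ)^2 = ∑ j ∈ Finset.Icc 1 M, (1:ℝ)/(j:ℝ)^2 := by
        rw [Finset.range_eq_Ico, show Finset.Ico 0 (M+1) = Finset.Icc 0 M by rfl]
        refine (Finset.sum_subset (by intro n hn; simp at hn ⊢; omega) ?_).symm
        intro n hn hn'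
        have : n = 0 := by simp at hn hn'; omega
        simp [this]
      rw [h1, hc]
      simp
    | succ L hL ih =>
      rw [Finset.sum_range_succ]
      have hL1 : (2:ℝ) ≤ (L:ℝ) := by exact_mod_cast show 2 ≤ L by omega
      have hLpos : (0:ℝ) < (L:ℝ) := by linarith
      have hLm1 : ((L-1:ℕ):ℝ) = (L:ℝ) - 1 := by
        have : 1 ≤ L := by omega
        push_cast [this]; ring
      have hstep : (1:ℝ)/(L:ℝ)^2 ≤ 1/((L:ℝ)-1) - 1/(L:ℝ) := by
        rw [div_sub_div _ _ (by linarith) (by positivity)]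
        rw [div_le_div_iff₀ (by positivity) (by nlinarith)]
        ring_nf
        nlinarith
      have : ((L+1-1:ℕ):ℝ) = (L:ℝ) := by push_cast; ring
      rw [this]
      rw [hLm1] at ih
      linarith
  have htend := hasSum_zeta_two.tendsto_sum_nat
  refine le_of_tendsto htend ?_
  filter_upwards [Filter.eventually_ge_atTop (M+2)] with L hL
  have h := key L (by omega)
  have h2 : (0:ℝ) ≤ 1/((L-1:ℕ):ℝ) := by positivity
  linarith

lemma filter_dvd_image (d N : ℕ) (hd : 0 < d) :
    (Finset.Icc 1 N).filter (d ∣ ·) = (Finset.Icc 1 (N/d)).image (d * ·) := by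
  ext m
  simp only [Finset.mem_filter, Finset.mem_Icc, Finset.mem_image]
  constructor
  · rintro ⟨⟨h1, h2⟩, j, rfl⟩
    have hj0 : 1 ≤ j := by by_contra h; push_neg at h; interval_cases j <;> omega
    have : j * d ≤ N := by rw [Nat.mul_comm]; exact h2
    exact ⟨j, ⟨hj0, (Nat.le_div_iff_mul_le hd).mpr this⟩, rfl⟩
  · rintro ⟨j, ⟨hj1, hj2⟩, rfl⟩
    have h3 := (Nat.le_div_iff_mul_le hd).mp hj2
    have h4 : d * j ≤ N := by rw [Nat.mul_comm]; exact h3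
    exact ⟨⟨Nat.one_le_iff_ne_zero.mpr (Nat.mul_ne_zero (by omega) (by omega)), h4⟩, ⟨j, rfl⟩⟩

lemma sum_multiples_real (d N : ℕ) (hd : 0 < d) :
    ∑ q ∈ (Finset.Icc 1 N).filter (d ∣ ·), (1:ℝ)/(q:ℝ)^2
      = (1/(d:ℝ)^2) * ∑ j ∈ Finset.Icc 1 (N/d), (1:ℝ)/(j:ℝ)^2 := by
  rw [filter_dvd_image d N hd, Finset.sum_image (by intro x _ y _ h; exact Nat.eq_of_mul_eq_mul_left hd h)]
  rw [Finset.mul_sum]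
  refine Finset.sum_congr rfl fun j hj => ?_
  have : ((d*j : ℕ):ℝ) = (d:ℝ)*(j:ℝ) := by push_cast; ring
  rw [this, mul_pow]
  field_simp

lemma gcd_eq_sum (q : ℕ) :
    (Nat.gcd q 30 : ℝ) = ∑ d ∈ Nat.divisors 30, (if d ∣ q then (Nat.totient d : ℝ) else 0) := by
  have h1 : (Nat.gcd q 30).divisors = (Nat.divisors 30).filter (· ∣ q) := by
    ext d
    simp only [Nat.mem_divisors, Finset.mem_filter, Nat.dvd_gcd_iff]
    constructor
    · rintro ⟨⟨h1, h2⟩, h3⟩; exact ⟨⟨h2, by norm_num⟩, h1⟩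
    · rintro ⟨⟨h2, _⟩, h1⟩
      refine ⟨⟨h1, h2⟩, ?_⟩
      have : 0 < Nat.gcd q 30 := Nat.gcd_pos_of_pos_right q (by norm_num)
      omega
  have h2 := Nat.sum_totient (Nat.gcd q 30)
  rw [h1] at h2
  rw [← h2]
  push_cast
  rw [Finset.sum_filter]

lemma harmonic_bound (N : ℕ) (hN : 1 ≤ N) :
    ∑ q ∈ Finset.Icc 1 N, (1:ℝ)/(q:ℝ) ≤ 1 + Real.log N := by
  have h := harmonic_le_one_add_log N
  have he : ((harmonic N : ℚ) : ℝ) = ∑ q ∈ Finset.Icc 1 N, (1:ℝ)/(q:ℝ) := by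
    rw [harmonic]
    push_cast
    rw [show Finset.Icc 1 N = Finset.Ico 1 (N+1) by rw [Finset.Ico_add_one_right_eq_Icc]]
    rw [Finset.sum_Ico_eq_sum_range]
    simp only [Nat.add_sub_cancel]
    refine Finset.sum_congr rfl fun i _ => ?_
    push_cast
    rw [add_comm, one_div]
  rw [← he]; exact h

lemma stepA (N n : ℕ) (hn : 1 ≤ n) :
    (∑ q ∈ Finset.Icc 1 N, if q ∣ n then n/q else 0) ≤ ArithmeticFunction.sigma 1 n := by
  rw [ArithmeticFunction.sigma_one_apply, ← Finset.sum_filter]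
  have hinj : ∀ q₁ ∈ (Finset.Icc 1 N).filter (· ∣ n), ∀ q₂ ∈ (Finset.Icc 1 N).filter (· ∣ n),
      n/q₁ = n/q₂ → q₁ = q₂ := by
    intro q₁ h₁ q₂ h₂ h
    simp only [Finset.mem_filter, Finset.mem_Icc] at h₁ h₂
    have e₁ := Nat.div_div_self h₁.2 (by omega)
    have e₂ := Nat.div_div_self h₂.2 (by omega)
    rw [← e₁, ← e₂, h]
  have himg : ∑ a ∈ (Finset.Icc 1 N).filter (· ∣ n), n / a
      = ∑ d ∈ ((Finset.Icc 1 N).filter (· ∣ n)).image (fun a => n / a), d :=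
    (Finset.sum_image (f := fun d => d) hinj).symm
  rw [himg]
  refine Finset.sum_le_sum_of_subset ?_
  intro d hd
  simp only [Finset.mem_image, Finset.mem_filter, Finset.mem_Icc] at hd
  obtain ⟨q, ⟨⟨hq1, _⟩, hqd⟩, rfl⟩ := hd
  rw [Nat.mem_divisors]
  exact ⟨Nat.div_dvd_of_dvd hqd, by omega⟩

lemma stepB (N q : ℕ) (hq : 1 ≤ q) :
    ∑ j ∈ Finset.Icc 1 (N / (q / Nat.gcd q 30)), (30 / Nat.gcd q 30) * j
      ≤ ∑ m ∈ Finset.Icc 1 N, if q ∣ 30*m then 30*m/q else 0 := by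
  set g := Nat.gcd q 30 with hgdef
  set k := q / g with hkdef
  have hg30 : g ∣ 30 := Nat.gcd_dvd_right q 30
  have hgq : g ∣ q := Nat.gcd_dvd_left q 30
  have hgpos : 0 < g := Nat.gcd_pos_of_pos_right q (by norm_num)
  have hkq : k * g = q := Nat.div_mul_cancel hgq
  have hkpos : 0 < k := by
    rcases Nat.eq_zero_or_pos k with h | h
    · rw [h] at hkq; simp at hkq; omega
    · exact h
  have e1 : ∑ j ∈ Finset.Icc 1 (N/k), (30/g) * j
      = ∑ m ∈ (Finset.Icc 1 N).filter (k ∣ ·), 30*m/q := by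
    rw [filter_dvd_image k N hkpos,
      Finset.sum_image (by intro a _ b _ h; exact Nat.eq_of_mul_eq_mul_left hkpos h)]
    refine Finset.sum_congr rfl fun j _ => ?_
    have h30 : 30/g*g = 30 := Nat.div_mul_cancel hg30
    have : 30*(k*j) = ((30/g)*j)*q := by
      rw [← hkq]
      calc 30*(k*j) = (30/g*g)*(k*j) := by rw [h30]
        _ = 30/g*j*(k*g) := by ring
    rw [this, Nat.mul_div_cancel _ (by omega)]
  rw [e1]
  have e2 : ∀ m ∈ (Finset.Icc 1 N).filter (k ∣ ·), 30*m/q = if q ∣ 30*m then 30*m/q else 0 := by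
    intro m hm
    simp only [Finset.mem_filter] at hm
    have : q ∣ 30*m := by
      rw [← hkq]
      rw [Nat.mul_comm k g]
      exact mul_dvd_mul hg30 hm.2
    rw [if_pos this]
  rw [Finset.sum_congr rfl e2]
  exact Finset.sum_le_sum_of_subset (Finset.filter_subset _ _)

lemma key_nat (N : ℕ) :
    ∑ q ∈ Finset.Icc 1 N, ∑ j ∈ Finset.Icc 1 (N / (q / Nat.gcd q 30)), (30 / Nat.gcd q 30) * j
      ≤ ∑ m ∈ Finset.Icc 1 N, ArithmeticFunction.sigma 1 (30 * m) := by
  calc ∑ q ∈ Finset.Icc 1 N, ∑ j ∈ Finset.Icc 1 (N / (q / Nat.gcd q 30)), (30 / Nat.gcd q 30) * j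
      ≤ ∑ q ∈ Finset.Icc 1 N, ∑ m ∈ Finset.Icc 1 N, if q ∣ 30*m then 30*m/q else 0 := by
        refine Finset.sum_le_sum fun q hq => ?_
        simp only [Finset.mem_Icc] at hq
        exact stepB N q hq.1
    _ = ∑ m ∈ Finset.Icc 1 N, ∑ q ∈ Finset.Icc 1 N, if q ∣ 30*m then 30*m/q else 0 :=
        Finset.sum_comm
    _ ≤ ∑ m ∈ Finset.Icc 1 N, ArithmeticFunction.sigma 1 (30 * m) := by
        refine Finset.sum_le_sum fun m hm => ?_
        simp only [Finset.mem_Icc] at hm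
        exact stepA N (30*m) (by omega)

lemma term_lower (d N : ℕ) (hd1 : 1 ≤ d) (hd : d ≤ 30) (hN : 1000 ≤ N) :
    π ^ 2 / 6 - (d:ℝ) * ((N:ℝ)-30)⁻¹ ≤ ∑ j ∈ Finset.Icc 1 (N/d), (1:ℝ)/(j:ℝ)^2 := by
  have hM : 1 ≤ N / d := by
    have h30 : 33 ≤ 1000 / d := by
      calc (33:ℕ) = 1000 / 30 := by norm_num
      _ ≤ 1000 / d := Nat.div_le_div_left hd (by omega)
    have := Nat.div_le_div_right (c := d) hN
    omega
  have hb := basel_partial (N/d) hM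
  have h1 : N - 30 ≤ d * (N / d) := by
    have h2 := Nat.div_add_mod N d
    have h3 : N % d < d := Nat.mod_lt N (by omega)
    omega
  have h1' : (N:ℝ) - 30 ≤ (d:ℝ) * ((N/d : ℕ):ℝ) := by
    have := (Nat.cast_le (α := ℝ)).mpr h1
    push_cast at this
    rw [Nat.cast_sub (by omega)] at this
    push_cast at this
    linarith
  have hNpos : (0:ℝ) < (N:ℝ) - 30 := by
    have : (1000:ℝ) ≤ (N:ℝ) := by exact_mod_cast hN
    linarith
  have hMpos : (0:ℝ) < ((N/d:ℕ):ℝ) := by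
    exact_mod_cast hM
  have htail : 1/((N/d:ℕ):ℝ) ≤ (d:ℝ) * ((N:ℝ)-30)⁻¹ := by
    rw [← div_eq_mul_inv, div_le_div_iff₀ hMpos hNpos]
    nlinarith
  linarith

lemma gcd_sum_lower (N : ℕ) (hN : 1000 ≤ N) :
    (1595/900) * (π^2/6) - (9/2) * ((N:ℝ) - 30)⁻¹
      ≤ ∑ q ∈ Finset.Icc 1 N, (Nat.gcd q 30 : ℝ)/(q:ℝ)^2 := by
  have step1 : ∑ q ∈ Finset.Icc 1 N, (Nat.gcd q 30 : ℝ)/(q:ℝ)^2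
      = ∑ d ∈ Nat.divisors 30, (Nat.totient d : ℝ) * ((1/(d:ℝ)^2) * ∑ j ∈ Finset.Icc 1 (N/d), (1:ℝ)/(j:ℝ)^2) := by
    have e1 : ∀ q ∈ Finset.Icc 1 N, (Nat.gcd q 30 : ℝ)/(q:ℝ)^2
        = ∑ d ∈ Nat.divisors 30, (if d ∣ q then (Nat.totient d : ℝ)/(q:ℝ)^2 else 0) := by
      intro q hq
      rw [gcd_eq_sum q, Finset.sum_div]
      refine Finset.sum_congr rfl fun d _ => ?_
      split <;> simp
    rw [Finset.sum_congr rfl e1, Finset.sum_comm]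
    refine Finset.sum_congr rfl fun d hd => ?_
    have hd0 : 0 < d := Nat.pos_of_mem_divisors hd
    rw [← sum_multiples_real d N hd0, ← Finset.sum_filter, Finset.mul_sum]
    refine Finset.sum_congr rfl fun q _ => ?_
    rw [div_eq_mul_one_div]
  rw [step1]
  rw [show Nat.divisors 30 = ({1,2,3,5,6,10,15,30} : Finset ℕ) from by decide]
  have t1 := term_lower 1 N (by norm_num) (by norm_num) hN
  have t2 := term_lower 2 N (by norm_num) (by norm_num) hN
  have t3 := term_lower 3 N (by norm_num) (by norm_num) hN
  have t5 := term_lower 5 N (by norm_num) (by norm_num) hN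
  have t6 := term_lower 6 N (by norm_num) (by norm_num) hN
  have t10 := term_lower 10 N (by norm_num) (by norm_num) hN
  have t15 := term_lower 15 N (by norm_num) (by norm_num) hN
  have t30 := term_lower 30 N (by norm_num) (by norm_num) hN
  rw [Finset.sum_insert (by decide), Finset.sum_insert (by decide), Finset.sum_insert (by decide),
    Finset.sum_insert (by decide), Finset.sum_insert (by decide), Finset.sum_insert (by decide),
    Finset.sum_insert (by decide), Finset.sum_singleton]
  rw [show Nat.totient 1 = 1 from by decide, show Nat.totient 2 = 1 from by decide,
    show Nat.totient 3 = 2 from by decide, show Nat.totient 5 = 4 from by decide,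
    show Nat.totient 6 = 2 from by decide, show Nat.totient 10 = 4 from by decide,
    show Nat.totient 15 = 8 from by decide, show Nat.totient 30 = 8 from by decide]
  push_cast at t1 t2 t3 t5 t6 t10 t15 t30 ⊢
  linarith

lemma per_q (N q : ℕ) (h1 : 1 ≤ q) (hq : q ≤ N) :
    15 * (N:ℝ)^2 * ((Nat.gcd q 30 : ℝ)/(q:ℝ)^2) - 30 * (N:ℝ) * (1/(q:ℝ))
      ≤ ((∑ j ∈ Finset.Icc 1 (N / (q / Nat.gcd q 30)), (30 / Nat.gcd q 30) * j : ℕ) : ℝ) := by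
  obtain ⟨g, hgdef⟩ : ∃ g, Nat.gcd q 30 = g := ⟨_, rfl⟩
  rw [hgdef]
  obtain ⟨k, hkdef⟩ : ∃ k, q / g = k := ⟨_, rfl⟩
  rw [hkdef]
  obtain ⟨M, hMdef⟩ : ∃ M, N / k = M := ⟨_, rfl⟩
  rw [hMdef]
  have hg30 : g ∣ 30 := hgdef ▸ Nat.gcd_dvd_right q 30
  have hgq : g ∣ q := hgdef ▸ Nat.gcd_dvd_left q 30
  have hgpos : 0 < g := hgdef ▸ Nat.gcd_pos_of_pos_right q (by norm_num)
  have hkq : k * g = q := by rw [← hkdef]; exact Nat.div_mul_cancel hgq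
  have hkpos : 0 < k := by
    rcases Nat.eq_zero_or_pos k with h | h
    · rw [h] at hkq; simp at hkq; omega
    · exact h
  have hkN : k ≤ N := by
    have : k ≤ q := by rw [← hkq]; exact Nat.le_mul_of_pos_right k hgpos
    omega
  have hMk : M * k ≤ N := by rw [← hMdef]; exact Nat.div_mul_le_self N k
  have hNk : N < M * k + k := by
    have h2 := Nat.div_add_mod N k
    rw [hMdef] at h2
    have h3 : N % k < k := Nat.mod_lt N hkpos
    have h4 : k * M = M * k := Nat.mul_comm k M
    omega
  -- Gauss sum
  have hrange : Finset.range (M+1) = insert 0 (Finset.Icc 1 M) := by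
    ext i; simp [Finset.mem_range, Finset.mem_Icc]; omega
  have hS : 2 * (∑ j ∈ Finset.Icc 1 M, j) = M * (M+1) := by
    have h4 := Finset.sum_range_id_mul_two (M+1)
    rw [hrange, Finset.sum_insert (by simp), Nat.add_sub_cancel, zero_add] at h4
    calc 2 * (∑ j ∈ Finset.Icc 1 M, j) = (∑ j ∈ Finset.Icc 1 M, j) * 2 := by ring
      _ = (M+1) * M := h4
      _ = M * (M+1) := by ring
  -- cast
  have hcast : ((∑ j ∈ Finset.Icc 1 M, (30 / g) * j : ℕ) : ℝ)
      = ((30/g : ℕ) : ℝ) * ∑ j ∈ Finset.Icc 1 M, (j:ℝ) := by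
    push_cast [Finset.mul_sum]
    ring
  have hc30 : ((30/g : ℕ) : ℝ) = 30 / (g:ℝ) :=
    Nat.cast_div hg30 (by exact_mod_cast hgpos.ne')
  have hSr : ∑ j ∈ Finset.Icc 1 M, (j:ℝ) = (M:ℝ) * ((M:ℝ)+1) / 2 := by
    have := congrArg (Nat.cast (R := ℝ)) hS
    push_cast at this
    linarith
  rw [hcast, hc30, hSr]
  have hqr : (q:ℝ) = (g:ℝ) * (k:ℝ) := by
    have := congrArg (Nat.cast (R := ℝ)) hkq
    push_cast at this
    linarith
  have ha1 : (1:ℝ) ≤ (g:ℝ) := by exact_mod_cast hgpos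
  have hb1 : (1:ℝ) ≤ (k:ℝ) := by exact_mod_cast hkpos
  have hm0 : (0:ℝ) ≤ (M:ℝ) := Nat.cast_nonneg M
  have hn0 : (0:ℝ) ≤ (N:ℝ) := Nat.cast_nonneg N
  have hbm : (k:ℝ) * (M:ℝ) ≤ (N:ℝ) := by
    have := (Nat.cast_le (α := ℝ)).mpr hMk
    push_cast at this; linarith [this]
  have hnb : (N:ℝ) < (k:ℝ) * (M:ℝ) + (k:ℝ) := by
    have := (Nat.cast_lt (α := ℝ)).mpr hNk
    push_cast at this; linarith [this]
  have hkNr : (k:ℝ) ≤ (N:ℝ) := by exact_mod_cast hkN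
  have hprod : ((N:ℝ) - k) * (N:ℝ) ≤ ((k:ℝ)*M) * ((k:ℝ)*M + k) :=
    mul_le_mul (by linarith) (by linarith) hn0 (by positivity)
  rw [hqr]
  have expand : 30 / (g:ℝ) * ((M:ℝ) * ((M:ℝ)+1) / 2)
      - (15 * (N:ℝ)^2 * ((g:ℝ)/((g:ℝ)*(k:ℝ))^2) - 30 * (N:ℝ) * (1/((g:ℝ)*(k:ℝ))))
      = (15*((M:ℝ)*((M:ℝ)+1))*(k:ℝ)^2 - 15*(N:ℝ)^2 + 30*(N:ℝ)*(k:ℝ)) / ((g:ℝ)*(k:ℝ)^2) := by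
    field_simp
    ring
  have hnum : (0:ℝ) ≤ 15*((M:ℝ)*((M:ℝ)+1))*(k:ℝ)^2 - 15*(N:ℝ)^2 + 30*(N:ℝ)*(k:ℝ) := by
    nlinarith [hprod]
  have hden : (0:ℝ) < (g:ℝ)*(k:ℝ)^2 := by positivity
  have hfin : (0:ℝ) ≤ 30 / (g:ℝ) * ((M:ℝ) * ((M:ℝ)+1) / 2)
      - (15 * (N:ℝ)^2 * ((g:ℝ)/((g:ℝ)*(k:ℝ))^2) - 30 * (N:ℝ) * (1/((g:ℝ)*(k:ℝ)))) := by
    rw [expand]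
    positivity
  linarith

theorem sum_sigma_lower (x : ℝ) (hx : x ≥ 1000) :
    (∑ m ∈ Finset.Icc 1 ⌊x⌋₊, (sigma 1 (30 * m) : ℝ)) >
      15 * (319 * π ^ 2 / 1080) * x ^ 2 - 2000 * x * Real.log (30 * x) := by
  obtain ⟨N, hNdef⟩ : ∃ N, ⌊x⌋₊ = N := ⟨_, rfl⟩
  rw [hNdef]
  have hN1000 : 1000 ≤ N := by
    rw [← hNdef]; exact Nat.le_floor (by exact_mod_cast hx)
  have hNx : (N:ℝ) ≤ x := by rw [← hNdef]; exact Nat.floor_le (by linarith)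
  have hxN : x < (N:ℝ) + 1 := by rw [← hNdef]; exact Nat.lt_floor_add_one x
  have hNR : (1000:ℝ) ≤ (N:ℝ) := by exact_mod_cast hN1000
  -- numeric facts
  have hpi2 : π^2 < 10 := by nlinarith [Real.pi_lt_d2, Real.pi_pos]
  have hpi0 : (0:ℝ) < π^2 := by positivity
  have hlog1 : (1:ℝ) ≤ Real.log (30*x) := by
    rw [Real.le_log_iff_exp_le (by linarith)]
    have h9 := Real.exp_one_lt_d9
    linarith
  have hlogN0 : (0:ℝ) ≤ Real.log N := Real.log_nonneg (by linarith)
  have hlogN : Real.log N ≤ Real.log (30*x) := by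
    apply Real.log_le_log (by linarith)
    linarith
  have hpos30 : (0:ℝ) < (N:ℝ) - 30 := by linarith
  have e1 : 15 * (319 * π ^ 2 / 1080) * (x^2 - (N:ℝ)^2) ≤ 90 * x := by
    have hsq : (x-1)^2 ≤ (N:ℝ)^2 := by nlinarith
    have hx2 : x^2 - (N:ℝ)^2 ≤ 2*x := by nlinarith
    have hge : (0:ℝ) ≤ x^2 - (N:ℝ)^2 := by nlinarith
    have hc : 15 * (319 * π ^ 2 / 1080) ≤ 45 := by nlinarith
    calc 15 * (319 * π ^ 2 / 1080) * (x^2 - (N:ℝ)^2) ≤ 45 * (2*x) :=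
          mul_le_mul hc hx2 hge (by norm_num)
      _ = 90 * x := by ring
  have e2 : 15*(N:ℝ)^2 * ((9/2) * ((N:ℝ) - 30)⁻¹) ≤ 70 * x := by
    have hid : ((N:ℝ)-30) * ((N:ℝ)-30)⁻¹ = 1 := mul_inv_cancel₀ hpos30.ne'
    have h2 : (135/2)*(N:ℝ)^2 ≤ 70*(N:ℝ)*((N:ℝ)-30) := by nlinarith
    have h1 : (135/2)*(N:ℝ)^2*(((N:ℝ)-30)⁻¹) ≤ 70*(N:ℝ) := by
      calc (135/2)*(N:ℝ)^2*(((N:ℝ)-30)⁻¹) ≤ (70*(N:ℝ)*((N:ℝ)-30))*(((N:ℝ)-30)⁻¹) :=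
            mul_le_mul_of_nonneg_right h2 (inv_nonneg.mpr hpos30.le)
        _ = 70*(N:ℝ) := by rw [mul_assoc, hid, mul_one]
    have : 15*(N:ℝ)^2 * ((9/2) * ((N:ℝ) - 30)⁻¹) = (135/2)*(N:ℝ)^2*(((N:ℝ)-30)⁻¹) := by ring
    linarith
  have e3 : 30*(N:ℝ)*(1 + Real.log N) ≤ 30*x + 30*(x * Real.log (30*x)) := by
    have h5 : (N:ℝ)*Real.log N ≤ x * Real.log (30*x) :=
      mul_le_mul hNx hlogN hlogN0 (by linarith)
    nlinarith [h5]
  have e4 : 190 * x < 1970 * (x * Real.log (30*x)) := by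
    nlinarith [hlog1]
  -- main chain
  have hkey := key_nat N
  have hkeyR : (↑(∑ q ∈ Finset.Icc 1 N, ∑ j ∈ Finset.Icc 1 (N / (q / Nat.gcd q 30)), (30 / Nat.gcd q 30) * j) : ℝ)
      ≤ ∑ m ∈ Finset.Icc 1 N, (sigma 1 (30 * m) : ℝ) := by
    exact_mod_cast hkey
  have hsum : 15*(N:ℝ)^2 * (∑ q ∈ Finset.Icc 1 N, (Nat.gcd q 30:ℝ)/(q:ℝ)^2)
      - 30*(N:ℝ)*(∑ q ∈ Finset.Icc 1 N, (1:ℝ)/(q:ℝ))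
      ≤ (↑(∑ q ∈ Finset.Icc 1 N, ∑ j ∈ Finset.Icc 1 (N / (q / Nat.gcd q 30)), (30 / Nat.gcd q 30) * j) : ℝ) := by
    rw [Nat.cast_sum, Finset.mul_sum, Finset.mul_sum, ← Finset.sum_sub_distrib]
    refine Finset.sum_le_sum fun q hq => ?_
    simp only [Finset.mem_Icc] at hq
    exact per_q N q hq.1 hq.2
  have hgcd := gcd_sum_lower N hN1000
  have hharm := harmonic_bound N (by omega)
  have hG : 15*(N:ℝ)^2 * ((1595/900) * (π^2/6) - (9/2) * ((N:ℝ) - 30)⁻¹)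
      ≤ 15*(N:ℝ)^2 * (∑ q ∈ Finset.Icc 1 N, (Nat.gcd q 30:ℝ)/(q:ℝ)^2) :=
    mul_le_mul_of_nonneg_left hgcd (by positivity)
  have hH : 30*(N:ℝ)*(∑ q ∈ Finset.Icc 1 N, (1:ℝ)/(q:ℝ)) ≤ 30*(N:ℝ)*(1 + Real.log N) :=
    mul_le_mul_of_nonneg_left hharm (by positivity)
  linarith [hkeyR, hsum, hG, hH, e1, e2, e3, e4]
end

section
/- Let k be an integer with 1 ≤ k ≤ 29 and gcd(k, 30) = 1, and let β_k = 8π²/75. For every real x ≥ 1000, ∑_{m ≤ x} σ(30m + k) < 15·β_k·x² + 100·x·log(30x + k), where the sum runs over positive integers m ≤ x. -/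
open ArithmeticFunction Finset Real

lemma aux_sum_range_le : ∀ (n : ℕ) (s : Finset ℕ), s.card = n →
    ∑ i ∈ Finset.range n, i ≤ ∑ q ∈ s, q := by
  intro n
  induction n with
  | zero => intro s _; simp
  | succ n ih =>
    intro s hs
    have hne : s.Nonempty := Finset.card_pos.mp (by omega)
    have hM : s.max' hne ∈ s := s.max'_mem hne
    have h1 : (s.erase (s.max' hne)).card = n := by rw [Finset.card_erase_of_mem hM, hs]; rfl
    have h2 : s ⊆ Finset.range (s.max' hne + 1) :=
      fun q hq => Finset.mem_range.mpr (Nat.lt_succ_of_le (Finset.le_max' s q hq))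
    have h3 : n + 1 ≤ s.max' hne + 1 := by
      have := (Finset.card_le_card h2).trans_eq (Finset.card_range _)
      omega
    calc ∑ i ∈ Finset.range (n+1), i = (∑ i ∈ Finset.range n, i) + n := Finset.sum_range_succ _ _
    _ ≤ (∑ q ∈ s.erase (s.max' hne), q) + s.max' hne := add_le_add (ih _ h1) (by omega)
    _ = ∑ q ∈ s, q := Finset.sum_erase_add s _ hM

lemma aux_class (S : Finset ℕ) (Q : ℕ) (hQ : ∀ q ∈ S, q ≤ Q)
    (hr : ∀ q ∈ S, ∀ q' ∈ S, q % 30 = q' % 30) :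
    (∑ q ∈ S, (q:ℝ)) ≤ ((Q:ℝ) + 15)^2 / 60 := by
  set φ : ℕ → ℕ := fun q => (Q - q)/30 with hφ
  have hinj : Set.InjOn φ S := by
    intro q hq q' hq' h
    have h1 := hQ q hq; have h2 := hQ q' hq'; have h3 := hr q hq q' hq'
    simp only [hφ] at h
    omega
  have hs1 : (∑ q ∈ S, q) + 30 * (∑ q ∈ S, φ q) ≤ S.card * Q := by
    calc (∑ q ∈ S, q) + 30 * (∑ q ∈ S, φ q) = ∑ q ∈ S, (q + 30 * φ q) := by
          rw [Finset.sum_add_distrib, Finset.mul_sum]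
    _ ≤ ∑ _q ∈ S, Q := Finset.sum_le_sum (fun q hq => by
          have := hQ q hq; simp only [hφ]; omega)
    _ = S.card * Q := by rw [Finset.sum_const, smul_eq_mul]
  have hs2 : S.card * (S.card - 1) ≤ 2 * ∑ q ∈ S, φ q := by
    have h4 : ∑ j ∈ S.image φ, j = ∑ q ∈ S, φ q :=
      Finset.sum_image (g := φ) (f := fun j => j) (fun a ha b hb h => hinj ha hb h)
    have h5 := aux_sum_range_le (S.image φ).card (S.image φ) rfl
    have h6 : (S.image φ).card = S.card := Finset.card_image_of_injOn hinj
    have h7 := Finset.sum_range_id_mul_two S.card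
    rw [h6] at h5
    omega
  have hkey : 2 * (∑ q ∈ S, q) + 30 * (S.card * (S.card - 1)) ≤ 2 * (S.card * Q) := by omega
  rcases Nat.eq_zero_or_pos S.card with hc | hc
  · have : S = ∅ := Finset.card_eq_zero.mp hc
    subst this
    simp
    positivity
  · have hc1 : 1 ≤ S.card := hc
    have hcast : 2 * (∑ q ∈ S, (q:ℝ)) + 30 * ((S.card:ℝ) * ((S.card:ℝ) - 1)) ≤
        2 * ((S.card:ℝ) * (Q:ℝ)) := by
      have h9 : ((2 * (∑ q ∈ S, q) + 30 * (S.card * (S.card - 1)) : ℕ) : ℝ) ≤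
          ((2 * (S.card * Q) : ℕ) : ℝ) := Nat.cast_le.mpr hkey
      push_cast [Nat.cast_sub hc1] at h9
      linarith
    have hc1' : (1:ℝ) ≤ (S.card:ℝ) := by exact_mod_cast hc1
    nlinarith [sq_nonneg (30*(S.card:ℝ) - ((Q:ℝ)+15)), hcast, hc1']

lemma aux_Icc_range (n : ℕ) (g : ℕ → ℝ) (h0 : g 0 = 0) :
    ∑ i ∈ Finset.range (n+1), g i = ∑ f ∈ Finset.Icc 1 n, g f := by
  have h : Finset.range (n+1) = insert 0 (Finset.Icc 1 n) := by
    ext i; simp only [Finset.mem_range, Finset.mem_Icc, Finset.mem_insert]; omega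
  rw [h, Finset.sum_insert (by simp), h0, zero_add]

lemma aux_basel_upper (n : ℕ) : ∑ f ∈ Finset.Icc 1 n, (1:ℝ)/(f:ℝ)^2 ≤ π^2/6 :=
  sum_le_hasSum (Finset.Icc 1 n) (fun i _ => by positivity) hasSum_zeta_two

lemma aux_basel_lower (n : ℕ) (hn : 1 ≤ n) :
    π^2/6 ≤ (∑ f ∈ Finset.Icc 1 n, (1:ℝ)/(f:ℝ)^2) + 1/(n:ℝ) := by
  have hn' : (1:ℝ) ≤ (n:ℝ) := by exact_mod_cast hn
  have hsummable : Summable (fun i : ℕ => (1:ℝ)/(i:ℝ)^2) := hasSum_zeta_two.summable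
  have hsplit := Summable.sum_add_tsum_nat_add (f := fun i : ℕ => (1:ℝ)/(i:ℝ)^2) (n+1) hsummable
  rw [hasSum_zeta_two.tsum_eq] at hsplit
  have hrange : ∑ i ∈ Finset.range (n+1), (1:ℝ)/(i:ℝ)^2
      = ∑ f ∈ Finset.Icc 1 n, (1:ℝ)/(f:ℝ)^2 := aux_Icc_range n _ (by norm_num)
  have htail : (∑' i : ℕ, (1:ℝ)/(((i + (n+1)) : ℕ):ℝ)^2) ≤ 1/(n:ℝ) := by
    apply Real.tsum_le_of_sum_range_le (fun i => by positivity)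
    intro m
    have hstep : ∀ i ∈ Finset.range m,
        (1:ℝ)/(((i + (n+1)) : ℕ):ℝ)^2 ≤
          (fun j => 1/((n:ℝ)+(j:ℕ))) i - (fun j => 1/((n:ℝ)+(j:ℕ))) (i+1) := by
      intro i _
      simp only
      have h1 : (0:ℝ) < (n:ℝ) + (i:ℕ) := by positivity
      have h2 : ((( i + (n+1)) : ℕ):ℝ) = (n:ℝ) + i + 1 := by push_cast; ring
      rw [h2]
      have h3 : 1/((n:ℝ)+i) - 1/((n:ℝ)+(i+1:ℕ)) = 1/(((n:ℝ)+i)*((n:ℝ)+i+1)) := by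
        have ha : ((n:ℝ)+(i:ℕ)) ≠ 0 := ne_of_gt h1
        have hb : ((n:ℝ)+(i:ℕ)+1) ≠ 0 := by positivity
        push_cast
        have hb' : ((n:ℝ)+((i:ℕ)+1)) ≠ 0 := by push_cast; positivity
        rw [div_sub_div _ _ ha hb', div_eq_div_iff (by positivity) (by positivity)]
        ring
      rw [h3]
      apply one_div_le_one_div_of_le (by positivity)
      nlinarith
    calc ∑ i ∈ Finset.range m, (1:ℝ)/(((i + (n+1)) : ℕ):ℝ)^2
        ≤ ∑ i ∈ Finset.range m,
            ((fun j => 1/((n:ℝ)+(j:ℕ))) i - (fun j => 1/((n:ℝ)+(j:ℕ))) (i+1)) :=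
          Finset.sum_le_sum hstep
      _ = 1/((n:ℝ)+(0:ℕ)) - 1/((n:ℝ)+(m:ℕ)) := Finset.sum_range_sub' _ m
      _ ≤ 1/(n:ℝ) := by
          simp only [Nat.cast_zero, add_zero]
          have : (0:ℝ) ≤ 1/((n:ℝ)+(m:ℕ)) := by positivity
          linarith
  rw [hrange] at hsplit
  linarith

lemma aux_Sd (d D : ℕ) (hd : 0 < d) :
    ∑ e ∈ (Finset.Icc 1 D).filter (fun e => d ∣ e), (1:ℝ)/(e:ℝ)^2
      = (1/(d:ℝ)^2) * ∑ f ∈ Finset.Icc 1 (D/d), (1:ℝ)/(f:ℝ)^2 := by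
  rw [Finset.mul_sum]
  apply Finset.sum_nbij' (i := fun e => e / d) (j := fun f => d * f)
  · intro e he
    simp only [Finset.mem_filter, Finset.mem_Icc] at he
    obtain ⟨⟨h1, h2⟩, c, rfl⟩ := he
    simp only [Finset.mem_Icc]
    rw [Nat.mul_div_cancel_left c hd]
    have hc : 1 ≤ c := Nat.one_le_iff_ne_zero.mpr (by rintro rfl; omega)
    exact ⟨hc, Nat.le_div_iff_mul_le hd |>.mpr (by rw [mul_comm]; exact h2)⟩
  · intro f hf
    simp only [Finset.mem_Icc] at hf
    simp only [Finset.mem_filter, Finset.mem_Icc]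
    have h2 : d * f ≤ D := by
      have := Nat.div_mul_le_self D d
      calc d * f ≤ d * (D/d) := Nat.mul_le_mul_left d hf.2
      _ = (D/d) * d := mul_comm _ _
      _ ≤ D := Nat.div_mul_le_self D d
    exact ⟨⟨Nat.mul_pos hd hf.1, h2⟩, dvd_mul_right d f⟩
  · intro e he
    simp only [Finset.mem_filter] at he
    exact Nat.mul_div_cancel' he.2
  · intro f _
    exact Nat.mul_div_cancel_left f hd
  · intro e he
    simp only [Finset.mem_filter, Finset.mem_Icc] at he
    obtain ⟨⟨h1, h2⟩, hdvd⟩ := he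
    obtain ⟨c, rfl⟩ := hdvd
    rw [Nat.mul_div_cancel_left c hd]
    have hc : c ≠ 0 := by rintro rfl; omega
    have hd0 : ((d:ℝ)) ≠ 0 := Nat.cast_ne_zero.mpr (by omega)
    have hc0 : ((c:ℝ)) ≠ 0 := Nat.cast_ne_zero.mpr hc
    push_cast
    field_simp

lemma aux_gcd30 (e : ℕ) : Nat.gcd e 30 = 1 ↔ ¬(2∣e) ∧ ¬(3∣e) ∧ ¬(5∣e) := by
  constructor
  · intro h
    refine ⟨?_, ?_, ?_⟩ <;> intro hdvd
    · have h2 : 2 ∣ Nat.gcd e 30 := Nat.dvd_gcd hdvd (by norm_num)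
      rw [h] at h2; omega
    · have h2 : 3 ∣ Nat.gcd e 30 := Nat.dvd_gcd hdvd (by norm_num)
      rw [h] at h2; omega
    · have h2 : 5 ∣ Nat.gcd e 30 := Nat.dvd_gcd hdvd (by norm_num)
      rw [h] at h2; omega
  · rintro ⟨a, b, c⟩
    have c2 : Nat.Coprime e 2 := (((Nat.prime_two).coprime_iff_not_dvd).mpr a).symm
    have c3 : Nat.Coprime e 3 := (((Nat.prime_three).coprime_iff_not_dvd).mpr b).symm
    have c5 : Nat.Coprime e 5 :=
      ((((by norm_num : Nat.Prime 5)).coprime_iff_not_dvd).mpr c).symm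
    have : Nat.Coprime e (2*(3*5)) := Nat.Coprime.mul_right c2 (Nat.Coprime.mul_right c3 c5)
    simpa using this

lemma aux_inv_div (D d : ℕ) (hd : 0 < d) (hD : 2*d ≤ D) :
    (1:ℝ)/((D/d : ℕ):ℝ) ≤ 2*(d:ℝ)/(D:ℝ) := by
  have h1 : D ≤ 2*(d*(D/d)) := by
    have h2 := Nat.div_add_mod D d
    have h3 := Nat.mod_lt D hd
    omega
  have hq : 0 < D/d := Nat.div_pos (by omega) hd
  rw [div_le_div_iff₀ (by exact_mod_cast hq) (by exact_mod_cast (by omega : 0 < D))]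
  have : (D:ℝ) ≤ 2*(d:ℝ)*((D/d : ℕ):ℝ) := by
    have := h1
    push_cast
    rw [mul_assoc]
    exact_mod_cast h1
  linarith

lemma aux_harmonic (D : ℕ) : ∑ e ∈ Finset.Icc 1 D, (1:ℝ)/(e:ℝ) ≤ 1 + Real.log D := by
  have h := harmonic_le_one_add_log D
  have he : ((harmonic D : ℚ) : ℝ) = ∑ e ∈ Finset.Icc 1 D, (1:ℝ)/(e:ℝ) := by
    rw [harmonic_eq_sum_Icc]
    push_cast
    simp [one_div]
  linarith

lemma aux_coprime_sum (D : ℕ) (hD : 30000 ≤ D) :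
    ∑ e ∈ (Finset.Icc 1 D).filter (fun e => Nat.gcd e 30 = 1), (1:ℝ)/(e:ℝ)^2
      ≤ 8*π^2/75 + 3/(D:ℝ) := by
  set g : ℕ → ℝ := fun e => (1:ℝ)/(e:ℝ)^2 with hg
  have key : ∀ e ∈ Finset.Icc 1 D,
      ((if Nat.gcd e 30 = 1 then g e else 0) + (if 2∣e then g e else 0) +
        (if 3∣e then g e else 0) + (if 5∣e then g e else 0) + (if 30∣e then g e else 0))
      = (g e + (if 6∣e then g e else 0) + (if 10∣e then g e else 0) +
          (if 15∣e then g e else 0)) := by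
    intro e _
    have h6 : (6∣e) ↔ (2∣e ∧ 3∣e) := by omega
    have h10 : (10∣e) ↔ (2∣e ∧ 5∣e) := by omega
    have h15 : (15∣e) ↔ (3∣e ∧ 5∣e) := by omega
    have h30 : (30∣e) ↔ (2∣e ∧ 3∣e ∧ 5∣e) := by omega
    simp only [aux_gcd30]
    by_cases h2 : 2∣e <;> by_cases h3 : 3∣e <;> by_cases h5 : 5∣e <;>
      simp [h2, h3, h5, h6, h10, h15, h30]
  have keysum := Finset.sum_congr rfl key
  simp only [Finset.sum_add_distrib, ← Finset.sum_filter] at keysum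
  -- now rewrite the divisor sums using aux_Sd
  have hS2 := aux_Sd 2 D (by norm_num)
  have hS3 := aux_Sd 3 D (by norm_num)
  have hS5 := aux_Sd 5 D (by norm_num)
  have hS6 := aux_Sd 6 D (by norm_num)
  have hS10 := aux_Sd 10 D (by norm_num)
  have hS15 := aux_Sd 15 D (by norm_num)
  have hS30 := aux_Sd 30 D (by norm_num)
  rw [hS2, hS3, hS5, hS6, hS10, hS15, hS30] at keysum
  have hu0 := aux_basel_upper D
  have hu6 := aux_basel_upper (D/6)
  have hu10 := aux_basel_upper (D/10)
  have hu15 := aux_basel_upper (D/15)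
  have hl2 := aux_basel_lower (D/2) (by omega)
  have hl3 := aux_basel_lower (D/3) (by omega)
  have hl5 := aux_basel_lower (D/5) (by omega)
  have hl30 := aux_basel_lower (D/30) (by omega)
  have hi2 := aux_inv_div D 2 (by norm_num) (by omega)
  have hi3 := aux_inv_div D 3 (by norm_num) (by omega)
  have hi5 := aux_inv_div D 5 (by norm_num) (by omega)
  have hi30 := aux_inv_div D 30 (by norm_num) (by omega)
  have hπ : (0:ℝ) ≤ π^2 := sq_nonneg π
  have hD' : (0:ℝ) < (D:ℝ) := by exact_mod_cast (by omega : 0 < D)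
  have hDinv : (0:ℝ) < 1/(D:ℝ) := by positivity
  -- combine
  norm_num at keysum hi2 hi3 hi5 hi30
  simp only [hg, one_div] at keysum hu0 hu6 hu10 hu15 hl2 hl3 hl5 hl30 ⊢
  clear key hS2 hS3 hS5 hS6 hS10 hS15 hS30 hD
  generalize ∑ e ∈ Finset.filter (fun a => Nat.gcd a 30 = 1) (Finset.Icc 1 D), ((e:ℝ) ^ 2)⁻¹ = s0 at *
  generalize ∑ e ∈ Finset.Icc 1 D, ((e:ℝ) ^ 2)⁻¹ = A0 at *
  generalize ∑ e ∈ Finset.Icc 1 (D/2), ((e:ℝ) ^ 2)⁻¹ = A2 at *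
  generalize ∑ e ∈ Finset.Icc 1 (D/3), ((e:ℝ) ^ 2)⁻¹ = A3 at *
  generalize ∑ e ∈ Finset.Icc 1 (D/5), ((e:ℝ) ^ 2)⁻¹ = A5 at *
  generalize ∑ e ∈ Finset.Icc 1 (D/6), ((e:ℝ) ^ 2)⁻¹ = A6 at *
  generalize ∑ e ∈ Finset.Icc 1 (D/10), ((e:ℝ) ^ 2)⁻¹ = A10 at *
  generalize ∑ e ∈ Finset.Icc 1 (D/15), ((e:ℝ) ^ 2)⁻¹ = A15 at *
  generalize ∑ e ∈ Finset.Icc 1 (D/30), ((e:ℝ) ^ 2)⁻¹ = A30 at *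
  generalize (((D/2 : ℕ)):ℝ)⁻¹ = i2 at *
  generalize (((D/3 : ℕ)):ℝ)⁻¹ = i3 at *
  generalize (((D/5 : ℕ)):ℝ)⁻¹ = i5 at *
  generalize (((D/30 : ℕ)):ℝ)⁻¹ = i30 at *
  generalize hiD : (1:ℝ)/((D:ℕ):ℝ) = iD at *
  have e4 : (4:ℝ)/(D:ℝ) = 4*iD := by rw [← hiD]; ring
  have e6 : (6:ℝ)/(D:ℝ) = 6*iD := by rw [← hiD]; ring
  have e10 : (10:ℝ)/(D:ℝ) = 10*iD := by rw [← hiD]; ring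
  have e60 : (60:ℝ)/(D:ℝ) = 60*iD := by rw [← hiD]; ring
  have e3 : (3:ℝ)/(D:ℝ) = 3*iD := by rw [← hiD]; ring
  rw [e4] at hi2
  rw [e6] at hi3
  rw [e10] at hi5
  rw [e60] at hi30
  rw [e3]
  linarith

set_option maxHeartbeats 1000000 in
theorem sum_sigma_upper (k : ℕ) (hk1 : 1 ≤ k) (hk2 : k ≤ 29) (hk : Nat.gcd k 30 = 1)
    (x : ℝ) (hx : x ≥ 1000) :
    (∑ m ∈ Finset.Icc 1 ⌊x⌋₊, (sigma 1 (30 * m + k) : ℝ)) <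
      15 * (8 * π ^ 2 / 75) * x ^ 2 + 100 * x * Real.log (30 * x + k) := by
  have hx0 : (0:ℝ) ≤ x := by linarith
  set N := ⌊x⌋₊ with hN
  have hN1000 : 1000 ≤ N := Nat.le_floor (by exact_mod_cast hx)
  have hNx : (N:ℝ) ≤ x := Nat.floor_le hx0
  set D := 30*N + k with hD
  have hDge : 30000 ≤ D := by omega
  -- Step 1: rewrite each sigma as a sum over potential divisors
  have hdiv : ∀ m ∈ Finset.Icc 1 N, ArithmeticFunction.sigma 1 (30*m+k)
      = ∑ e ∈ Finset.Icc 1 D, (if e ∣ 30*m+k then (30*m+k)/e else 0) := by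
    intro m hm
    have hmN : m ≤ N := (Finset.mem_Icc.mp hm).2
    have hpos : 0 < 30*m+k := by omega
    have hdiveq : (30*m+k).divisors
        = (Finset.Icc 1 D).filter (fun d => d ∣ (30*m+k)) := by
      ext d
      simp only [Nat.mem_divisors, Finset.mem_filter, Finset.mem_Icc]
      constructor
      · rintro ⟨hdvd, -⟩
        have h1 : 0 < d := Nat.pos_of_dvd_of_pos hdvd hpos
        have h2 : d ≤ 30*m+k := Nat.le_of_dvd hpos hdvd
        exact ⟨⟨h1, by omega⟩, hdvd⟩
      · rintro ⟨-, hdvd⟩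
        exact ⟨hdvd, by omega⟩
    rw [sigma_one_apply, ← Nat.sum_div_divisors (30*m+k) (fun d => d), hdiveq, Finset.sum_filter]
  have htotal : ∑ m ∈ Finset.Icc 1 N, ArithmeticFunction.sigma 1 (30*m+k)
      = ∑ e ∈ Finset.Icc 1 D,
          ∑ m ∈ (Finset.Icc 1 N).filter (fun m => e ∣ 30*m+k), (30*m+k)/e := by
    rw [Finset.sum_congr rfl hdiv, Finset.sum_comm]
    exact Finset.sum_congr rfl (fun e _ => (Finset.sum_filter _ _).symm)
  -- coprimality of divisors
  have hcop : ∀ (m e : ℕ), e ∣ 30*m+k → Nat.gcd e 30 = 1 := by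
    intro m e hdvd
    have hmod : (30*m+k) % 30 = k % 30 := by omega
    have h1 : Nat.gcd (30*m+k) 30 = 1 := by
      rw [Nat.gcd_comm, Nat.gcd_rec, hmod, ← Nat.gcd_rec, Nat.gcd_comm]
      exact hk
    have h3 : Nat.gcd e 30 ∣ Nat.gcd (30*m+k) 30 :=
      Nat.dvd_gcd ((Nat.gcd_dvd_left e 30).trans hdvd) (Nat.gcd_dvd_right e 30)
    rw [h1] at h3
    exact Nat.dvd_one.mp h3
  -- per-e bound
  have hTb : ∀ e ∈ Finset.Icc 1 D,
      ((∑ m ∈ (Finset.Icc 1 N).filter (fun m => e ∣ 30*m+k), (30*m+k)/e : ℕ) : ℝ)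
        ≤ (((D/e : ℕ):ℝ) + 15)^2/60 := by
    intro e he
    by_cases hfe : ((Finset.Icc 1 N).filter (fun m => e ∣ 30*m+k)).Nonempty
    · obtain ⟨m0, hm0⟩ := hfe
      have hecop : Nat.gcd e 30 = 1 := hcop m0 e (Finset.mem_filter.mp hm0).2
      set M := (Finset.Icc 1 N).filter (fun m => e ∣ 30*m+k) with hM
      have hinj : ∀ m1 ∈ M, ∀ m2 ∈ M, (30*m1+k)/e = (30*m2+k)/e → m1 = m2 := by
        intro m1 h1 m2 h2 heq
        have d1 : e ∣ 30*m1+k := (Finset.mem_filter.mp h1).2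
        have d2 : e ∣ 30*m2+k := (Finset.mem_filter.mp h2).2
        have e1 : e * ((30*m1+k)/e) = 30*m1+k := Nat.mul_div_cancel' d1
        have e2 : e * ((30*m2+k)/e) = 30*m2+k := Nat.mul_div_cancel' d2
        rw [heq] at e1
        omega
      set S := M.image (fun m => (30*m+k)/e) with hS
      have hsum : ∑ q ∈ S, (q:ℝ) = ∑ m ∈ M, (((30*m+k)/e : ℕ):ℝ) :=
        Finset.sum_image (fun a ha b hb hab => hinj a ha b hb hab)
      have hQ : ∀ q ∈ S, q ≤ D/e := by
        intro q hq
        obtain ⟨m, hm, rfl⟩ := Finset.mem_image.mp hq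
        have hmN : m ≤ N := (Finset.mem_Icc.mp (Finset.mem_filter.mp hm).1).2
        exact Nat.div_le_div_right (by omega)
      have hr : ∀ q ∈ S, ∀ q' ∈ S, q % 30 = q' % 30 := by
        intro q hq q' hq'
        obtain ⟨m, hm, rfl⟩ := Finset.mem_image.mp hq
        obtain ⟨m', hm', rfl⟩ := Finset.mem_image.mp hq'
        have d1 : e ∣ 30*m+k := (Finset.mem_filter.mp hm).2
        have d2 : e ∣ 30*m'+k := (Finset.mem_filter.mp hm').2
        have e1 : e * ((30*m+k)/e) = 30*m+k := Nat.mul_div_cancel' d1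
        have e2 : e * ((30*m'+k)/e) = 30*m'+k := Nat.mul_div_cancel' d2
        have hmd : e * ((30*m+k)/e) % 30 = e * ((30*m'+k)/e) % 30 := by
          rw [e1, e2]; omega
        exact Nat.ModEq.cancel_left_of_coprime (by rwa [Nat.gcd_comm] at hecop) hmd
      calc ((∑ m ∈ M, (30*m+k)/e : ℕ) : ℝ)
          = ∑ m ∈ M, (((30*m+k)/e : ℕ):ℝ) := Nat.cast_sum _ _
        _ = ∑ q ∈ S, (q:ℝ) := hsum.symm
        _ ≤ (((D/e : ℕ):ℝ) + 15)^2/60 := aux_class S (D/e) hQ hr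
    · rw [Finset.not_nonempty_iff_eq_empty] at hfe
      rw [hfe]
      simp only [Finset.sum_empty, Nat.cast_zero]
      positivity
  -- pass to the coprime filter
  set F := (Finset.Icc 1 D).filter (fun e => Nat.gcd e 30 = 1) with hF
  have step2 : ∑ e ∈ Finset.Icc 1 D,
        ((∑ m ∈ (Finset.Icc 1 N).filter (fun m => e ∣ 30*m+k), (30*m+k)/e : ℕ) : ℝ)
      = ∑ e ∈ F, ((∑ m ∈ (Finset.Icc 1 N).filter (fun m => e ∣ 30*m+k), (30*m+k)/e : ℕ) : ℝ) := by
    refine (Finset.sum_subset (Finset.filter_subset _ _) ?_).symm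
    intro e heIcc heF
    have hng : ¬ (Nat.gcd e 30 = 1) := by
      intro hg
      exact heF (Finset.mem_filter.mpr ⟨heIcc, hg⟩)
    have hempty : (Finset.Icc 1 N).filter (fun m => e ∣ 30*m+k) = ∅ :=
      Finset.filter_eq_empty_iff.mpr (fun m _ hdvd => hng (hcop m e hdvd))
    rw [hempty]
    simp
  have step3 : ∑ e ∈ F, ((∑ m ∈ (Finset.Icc 1 N).filter (fun m => e ∣ 30*m+k), (30*m+k)/e : ℕ) : ℝ)
      ≤ ∑ e ∈ F, ((D:ℝ)^2/60 * (1/(e:ℝ)^2) + (D:ℝ)/2 * (1/(e:ℝ)) + 15/4) := by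
    apply Finset.sum_le_sum
    intro e heF
    have heIcc : e ∈ Finset.Icc 1 D := (Finset.mem_filter.mp heF).1
    have he1 : 1 ≤ e := (Finset.mem_Icc.mp heIcc).1
    have he1' : (1:ℝ) ≤ (e:ℝ) := by exact_mod_cast he1
    have hcd : ((D/e : ℕ):ℝ) ≤ (D:ℝ)/(e:ℝ) := Nat.cast_div_le
    have hmono : (((D/e : ℕ):ℝ) + 15)^2/60 ≤ ((D:ℝ)/(e:ℝ) + 15)^2/60 := by
      gcongr <;> positivity
    have hexp : ((D:ℝ)/(e:ℝ) + 15)^2/60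
        = (D:ℝ)^2/60 * (1/(e:ℝ)^2) + (D:ℝ)/2 * (1/(e:ℝ)) + 15/4 := by
      have : (e:ℝ) ≠ 0 := by linarith
      field_simp
      ring
    rw [← hexp]
    exact le_trans (hTb e heIcc) hmono
  have step4 : ∑ e ∈ F, ((D:ℝ)^2/60 * (1/(e:ℝ)^2) + (D:ℝ)/2 * (1/(e:ℝ)) + 15/4)
      = (D:ℝ)^2/60 * (∑ e ∈ F, 1/(e:ℝ)^2) + (D:ℝ)/2 * (∑ e ∈ F, 1/(e:ℝ))
        + 15/4 * (F.card:ℝ) := by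
    rw [Finset.sum_add_distrib, Finset.sum_add_distrib, ← Finset.mul_sum, ← Finset.mul_sum,
      Finset.sum_const, nsmul_eq_mul]
    ring
  -- bounds on the three sums
  have b1 : ∑ e ∈ F, 1/(e:ℝ)^2 ≤ 8*π^2/75 + 3/(D:ℝ) := aux_coprime_sum D hDge
  have b2 : ∑ e ∈ F, 1/(e:ℝ) ≤ 1 + Real.log D := by
    refine le_trans (Finset.sum_le_sum_of_subset_of_nonneg (Finset.filter_subset _ _)
      (fun e _ _ => by positivity)) (aux_harmonic D)
  have b3 : (F.card:ℝ) ≤ (D:ℝ) := by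
    have h1 : F.card ≤ (Finset.Icc 1 D).card := Finset.card_filter_le _ _
    have h2 : (Finset.Icc 1 D).card = D := by rw [Nat.card_Icc]; omega
    exact_mod_cast h1.trans_eq h2
  -- numeric endgame
  set L := Real.log (30*x + (k:ℝ)) with hL
  have hk29 : (k:ℝ) ≤ 29 := by exact_mod_cast hk2
  have hk1' : (1:ℝ) ≤ (k:ℝ) := by exact_mod_cast hk1
  have hd1 : (D:ℝ) ≤ 30*x + (k:ℝ) := by
    rw [hD]
    push_cast
    linarith
  have hd0 : (30000:ℝ) ≤ (D:ℝ) := by exact_mod_cast hDge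
  have hlogd : Real.log D ≤ L := Real.log_le_log (by linarith) hd1
  have hlog0 : (0:ℝ) ≤ Real.log D := Real.log_nonneg (by linarith)
  have hL10 : (10:ℝ) ≤ L := by
    have h30 : (30000:ℝ) ≤ 30*x + (k:ℝ) := by linarith
    have l1 : Real.log 30000 ≤ L := Real.log_le_log (by norm_num) h30
    have l2 : (10:ℝ) ≤ Real.log 30000 := by
      rw [Real.le_log_iff_exp_le (by norm_num)]
      have hexp1 := Real.exp_one_lt_d9
      calc Real.exp 10 = (Real.exp 1)^(10:ℕ) := by
            rw [← Real.exp_nat_mul]; norm_num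
        _ ≤ 2.7182818286^(10:ℕ) := pow_le_pow_left₀ (Real.exp_pos 1).le hexp1.le 10
        _ ≤ 30000 := by norm_num
    linarith
  have hLx : L ≤ x + 29 := by
    have h31 : 30*x + (k:ℝ) ≤ 31*x := by linarith
    have l1 : L ≤ Real.log (31*x) := Real.log_le_log (by linarith) h31
    rw [Real.log_mul (by norm_num) (by linarith)] at l1
    have l31 : Real.log 31 ≤ 30 := by
      have := Real.log_le_sub_one_of_pos (by norm_num : (0:ℝ) < 31)
      linarith
    have lx : Real.log x ≤ x - 1 := Real.log_le_sub_one_of_pos (by linarith)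
    linarith
  have hπu : π^2 ≤ 9.9225 := by nlinarith [Real.pi_lt_d2, Real.pi_gt_three]
  have hπl : (0:ℝ) ≤ π^2 := sq_nonneg π
  -- putting it together
  have hsimp : (D:ℝ)^2/60 * (8*π^2/75 + 3/(D:ℝ)) = 8*π^2/4500*(D:ℝ)^2 + (D:ℝ)/20 := by
    have : (D:ℝ) ≠ 0 := by linarith
    field_simp
    ring
  have hfinal : (D:ℝ)^2/60 * (8*π^2/75 + 3/(D:ℝ)) + (D:ℝ)/2 * (1 + Real.log D)
      + 15/4 * (D:ℝ) < 15 * (8*π^2/75) * x^2 + 100*x*L := by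
    rw [hsimp]
    have c1 : 8*π^2/4500*(D:ℝ)^2 ≤ 8*π^2/4500*(30*x+29)^2 := by
      have hDb : (D:ℝ) ≤ 30*x+29 := by linarith
      gcongr <;> linarith
    have c2 : 8*π^2/4500*(30*x+29)^2 = 15*(8*π^2/75)*x^2 + 8*π^2/4500*(1740*x+841) := by
      ring
    have c3 : 8*π^2/4500*(1740*x+841) ≤ 8*9.9225/4500*(1740*x+841) := by
      nlinarith [mul_nonneg (show (0:ℝ) ≤ 1740*x+841 by linarith)
        (show (0:ℝ) ≤ 9.9225 - π^2 by linarith)]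
    have c4 : (D:ℝ) * (1 + Real.log D) ≤ (30*x+29) * (1+L) :=
      mul_le_mul (by linarith) (by linarith) (by linarith) (by linarith)
    have c6 : 8*9.9225/4500*(1740*x+841) + (30*x+29)/20 + (30*x+29)/2*(1+L)
        + 15/4*(30*x+29) < 100*x*L := by
      nlinarith [mul_nonneg (show (0:ℝ) ≤ L - 10 by linarith)
        (show (0:ℝ) ≤ 85*x - 14.5 by linarith)]
    linarith
  -- conclude
  have hLHS : (∑ m ∈ Finset.Icc 1 N, (ArithmeticFunction.sigma 1 (30 * m + k) : ℝ))
      = ∑ e ∈ F, ((∑ m ∈ (Finset.Icc 1 N).filter (fun m => e ∣ 30*m+k), (30*m+k)/e : ℕ) : ℝ) := by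
    rw [← Nat.cast_sum, htotal, Nat.cast_sum, step2]
  have hgoal : (30*x + ((k:ℕ):ℝ)) = 30*x + (k:ℝ) := rfl
  calc (∑ m ∈ Finset.Icc 1 N, (ArithmeticFunction.sigma 1 (30 * m + k) : ℝ))
      = ∑ e ∈ F, ((∑ m ∈ (Finset.Icc 1 N).filter (fun m => e ∣ 30*m+k), (30*m+k)/e : ℕ) : ℝ) := hLHS
    _ ≤ (D:ℝ)^2/60 * (∑ e ∈ F, 1/(e:ℝ)^2) + (D:ℝ)/2 * (∑ e ∈ F, 1/(e:ℝ)) + 15/4 * (F.card:ℝ) := by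
        rw [← step4]; exact step3
    _ ≤ (D:ℝ)^2/60 * (8*π^2/75 + 3/(D:ℝ)) + (D:ℝ)/2 * (1 + Real.log D) + 15/4 * (D:ℝ) := by
        gcongr <;> positivity
    _ < 15 * (8*π^2/75) * x^2 + 100*x*L := hfinal
end
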